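/- arXiv:1808.01902 — 7 statements merged into one kernel-verified Lean document; each statement's English description precedes it below -/
import Mathlib

section
/- For every real t with 0 < t < 1, setting x = 2t/(1+t²), one has 1/M(1+x, 1−x) = (1+t²)/M(1+t², 1−t²), where M denotes the arithmetic–geometric mean. -/
open Filter Topology

/-- The pair of sequences defined by iterating the arithmetic mean and the geometric mean. -/
noncomputable def agmSeq (a b : ℝ) : ℕ → ℝ × ℝ
  | 0 => (a, b)
  | n + 1 => (((agmSeq a b n).1 + (agmSeq a b n).2) / 2,
      Real.sqrt ((agmSeq a b n).1 * (agmSeq a b n).2))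

/-- The arithmetic–geometric mean of `a` and `b`: the common limit of the two sequences. -/
noncomputable def agm (a b : ℝ) : ℝ :=
  limUnder atTop (fun n => (agmSeq a b n).1)

lemma agmSeq_shift (a b : ℝ) (n : ℕ) :
    agmSeq a b (n + 1) = agmSeq ((a + b) / 2) (Real.sqrt (a * b)) n := by
  induction n with
  | zero => rfl
  | succ n ih =>
    conv_lhs => rw [agmSeq, ih]
    rfl

lemma agm_shift (a b : ℝ) : agm a b = agm ((a + b) / 2) (Real.sqrt (a * b)) := by
  unfold agm limUnder
  congr 1
  have h : (fun n => (agmSeq ((a + b) / 2) (Real.sqrt (a * b)) n).1)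
      = (fun n => (agmSeq a b n).1) ∘ (fun n => n + 1) := by
    funext n; simp [← agmSeq_shift]
  rw [h, ← Filter.map_map, Filter.map_add_atTop_eq_nat]

lemma agmSeq_smul (c a b : ℝ) (hc : 0 ≤ c) (n : ℕ) :
    agmSeq (c * a) (c * b) n = (c * (agmSeq a b n).1, c * (agmSeq a b n).2) := by
  induction n with
  | zero => rfl
  | succ n ih =>
    simp only [agmSeq, ih]
    refine Prod.ext ?_ ?_
    · simp; ring
    · simp only
      rw [show c * (agmSeq a b n).1 * (c * (agmSeq a b n).2)
          = c ^ 2 * ((agmSeq a b n).1 * (agmSeq a b n).2) by ring,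
        Real.sqrt_mul (sq_nonneg c), Real.sqrt_sq hc]

lemma agmSeq_pos (a b : ℝ) (hb : 0 < b) (hba : b ≤ a) (n : ℕ) :
    b ≤ (agmSeq a b n).2 ∧ (agmSeq a b n).2 ≤ (agmSeq a b n).1 := by
  induction n with
  | zero => exact ⟨le_refl b, hba⟩
  | succ n ih =>
    obtain ⟨h1, h2⟩ := ih
    have hbn : 0 < (agmSeq a b n).2 := lt_of_lt_of_le hb h1
    have hx : 0 < (agmSeq a b n).1 := lt_of_lt_of_le hbn h2
    constructor
    · have : (agmSeq a b n).2 ≤ Real.sqrt ((agmSeq a b n).1 * (agmSeq a b n).2) := by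
        apply Real.le_sqrt_of_sq_le
        nlinarith
      calc b ≤ (agmSeq a b n).2 := h1
        _ ≤ (agmSeq a b (n+1)).2 := by simpa [agmSeq] using this
    · have key : Real.sqrt ((agmSeq a b n).1 * (agmSeq a b n).2)
          ≤ ((agmSeq a b n).1 + (agmSeq a b n).2) / 2 := by
        rw [show ((agmSeq a b n).1 + (agmSeq a b n).2) / 2
            = Real.sqrt ((((agmSeq a b n).1 + (agmSeq a b n).2) / 2) ^ 2) from
            (Real.sqrt_sq (by positivity)).symm]
        apply Real.sqrt_le_sqrt
        nlinarith
      simpa [agmSeq] using key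

lemma agm_tendsto (a b : ℝ) (hb : 0 < b) (hba : b ≤ a) :
    Tendsto (fun n => (agmSeq a b n).1) atTop (𝓝 (agm a b)) := by
  have hanti : Antitone fun n => (agmSeq a b n).1 := by
    apply antitone_nat_of_succ_le
    intro n
    have h := agmSeq_pos a b hb hba n
    simp only [agmSeq]
    linarith [h.1, h.2]
  have hbdd : BddBelow (Set.range fun n => (agmSeq a b n).1) := by
    refine ⟨0, ?_⟩
    rintro x ⟨n, rfl⟩
    have h := agmSeq_pos a b hb hba n
    linarith [h.1, h.2]
  have hL := tendsto_atTop_ciInf hanti hbdd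
  rw [show agm a b = _ from hL.limUnder_eq]
  exact hL

lemma agm_smul (c a b : ℝ) (hc : 0 < c) (hb : 0 < b) (hba : b ≤ a) :
    agm (c * a) (c * b) = c * agm a b := by
  have h := agm_tendsto a b hb hba
  have h2 : Tendsto (fun n => (agmSeq (c * a) (c * b) n).1) atTop (𝓝 (c * agm a b)) := by
    simp only [agmSeq_smul c a b hc.le]
    exact h.const_mul c
  exact h2.limUnder_eq

lemma agm_pos (a b : ℝ) (hb : 0 < b) (hba : b ≤ a) : 0 < agm a b := by
  have h := agm_tendsto a b hb hba
  have hle : b ≤ agm a b := by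
    apply ge_of_tendsto' h
    intro n
    have hp := agmSeq_pos a b hb hba n
    linarith [hp.1, hp.2]
  linarith

theorem agm_landen (t : ℝ) (ht0 : 0 < t) (ht1 : t < 1) :
    1 / agm (1 + 2 * t / (1 + t ^ 2)) (1 - 2 * t / (1 + t ^ 2)) =
      (1 + t ^ 2) / agm (1 + t ^ 2) (1 - t ^ 2) := by
  have ht2 : (0:ℝ) < 1 + t ^ 2 := by positivity
  have ht2' : (1:ℝ) + t ^ 2 ≠ 0 := ne_of_gt ht2
  have htt : t ^ 2 < 1 := by nlinarith
  have hb : 0 < (1 - t ^ 2) / (1 + t ^ 2) := by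
    apply div_pos <;> nlinarith
  have hb1 : (1 - t ^ 2) / (1 + t ^ 2) ≤ 1 := by
    rw [div_le_one ht2]; nlinarith
  have h1 : agm (1 + 2 * t / (1 + t ^ 2)) (1 - 2 * t / (1 + t ^ 2))
      = agm 1 ((1 - t ^ 2) / (1 + t ^ 2)) := by
    rw [agm_shift]
    congr 1
    · field_simp
      ring
    · rw [show (1 + 2 * t / (1 + t ^ 2)) * (1 - 2 * t / (1 + t ^ 2))
          = ((1 - t ^ 2) / (1 + t ^ 2)) ^ 2 by field_simp; ring]
      exact Real.sqrt_sq hb.le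
  have h2 : agm (1 + t ^ 2) (1 - t ^ 2)
      = (1 + t ^ 2) * agm 1 ((1 - t ^ 2) / (1 + t ^ 2)) := by
    have h := agm_smul (1 + t ^ 2) 1 ((1 - t ^ 2) / (1 + t ^ 2)) ht2 hb hb1
    rw [mul_one, show (1 + t ^ 2) * ((1 - t ^ 2) / (1 + t ^ 2)) = 1 - t ^ 2 by
      field_simp] at h
    exact h
  have hA : 0 < agm 1 ((1 - t ^ 2) / (1 + t ^ 2)) := agm_pos _ _ hb hb1
  rw [h1, h2]
  rw [show (1 + t ^ 2) / ((1 + t ^ 2) * agm 1 ((1 - t ^ 2) / (1 + t ^ 2)))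
      = 1 / agm 1 ((1 - t ^ 2) / (1 + t ^ 2)) by
    field_simp]
end

section
/- For every real x with |x| < 1, 1/M(1+x, 1−x) = Σ_{k=0}^∞ ( (2k choose k) / 4^k )² · x^{2k}, where M denotes the arithmetic–geometric mean. (The coefficient ((2k choose k)/4^k)² equals ((1·3·5···(2k−1))/(2·4·6···(2k)))².) -/
/-!
Gauss's integral `I(a, b) = ∫ dt / √((t² + a²)(t² + b²))` over `ℝ` is unchanged when `(a, b)` is
replaced by its arithmetic and geometric means (Newman's substitution `t ↦ (t - ab/t)/2` maps
`(0, ∞)` onto `ℝ`), and for `0 < b ≤ a` it lies between `π / a` and `π / b`. Along the AGM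
iteration both bounds tend to `π / M(a, b)`, so `I(a, b) = π / M(a, b)`.

One AGM step takes `(1 + x, 1 - x)` to `(1, √(1 - x²))`. Expanding the integrand of
`I(1, √(1 - x²))` with the binomial series of `(1 - y)^(-1/2)` at `y = x² / (t² + 1)` and
integrating termwise with `∫ (t² + 1)^(-(k+1)) dt = π (2k choose k) / 4^k` gives `π` times the
series.
-/

open Filter Topology

open MeasureTheory Set Real
open scoped NNReal

lemma Ring.succ_mul_multichoose_succ {K : Type*} [Field K] [CharZero K] [BinomialRing K]
    (r : K) (k : ℕ) :
    (k + 1) * Ring.multichoose r (k + 1) = (r + k) * Ring.multichoose r k := by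
  have h (n : ℕ) : Ring.multichoose r n = (ascPochhammer K n).eval r / n.factorial := by
    rw [eq_div_iff (Nat.cast_ne_zero.2 n.factorial_ne_zero), mul_comm, ← nsmul_eq_mul,
      Ring.factorial_nsmul_multichoose_eq_ascPochhammer, Polynomial.ascPochhammer_smeval_eq_eval]
  rw [h, h, ascPochhammer_succ_eval, Nat.factorial_succ]
  push_cast
  field_simp

lemma Ring.multichoose_half (k : ℕ) :
    Ring.multichoose (1 / 2 : ℝ) k = k.centralBinom / 4 ^ k := by
  induction k with
  | zero => simp
  | succ k ih =>
    have hc : (k + 1 : ℝ) * (k + 1).centralBinom = 2 * (2 * k + 1) * k.centralBinom := by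
      exact_mod_cast Nat.succ_mul_centralBinom_succ k
    apply mul_left_cancel₀ (show (k + 1 : ℝ) ≠ 0 by positivity)
    rw [Ring.succ_mul_multichoose_succ, ih, pow_succ]
    field_simp
    linear_combination -2 * hc

lemma hasSum_multichoose_half_mul_pow {y : ℝ} (hy : |y| < 1) :
    HasSum (fun k ↦ Ring.multichoose (1 / 2 : ℝ) k * y ^ k) (√(1 - y))⁻¹ := by
  have h := (one_div_one_sub_rpow_hasFPowerSeriesOnBall_zero (1 / 2)).hasSum
    (y := y) (by simpa [enorm_eq_nnnorm, ← NNReal.coe_lt_coe] using hy)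
  simp only [FormalMultilinearSeries.ofScalars_apply_eq, smul_eq_mul, zero_add,
    ← Ring.multichoose_eq] at h
  rwa [sqrt_eq_rpow, inv_eq_one_div]

lemma integrable_inv_sq_add_one_pow (k : ℕ) :
    Integrable fun t : ℝ ↦ ((t ^ 2 + 1) ^ (k + 1))⁻¹ := by
  refine integrable_inv_one_add_sq.mono' (by fun_prop (disch := positivity))
    (.of_forall fun t ↦ ?_)
  rw [norm_inv, norm_pow, Real.norm_of_nonneg (by positivity), add_comm 1]
  exact inv_anti₀ (by positivity) (le_self_pow₀ (by nlinarith) (by omega))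

lemma abs_mul_inv_sq_add_one_pow_le (k : ℕ) (t : ℝ) : |t * ((t ^ 2 + 1) ^ (k + 1))⁻¹| ≤ |t|⁻¹ := by
  rcases eq_or_ne t 0 with rfl | ht
  · simp
  rw [abs_mul, abs_inv, abs_of_pos (a := (t ^ 2 + 1) ^ (k + 1)) (by positivity),
    mul_inv_le_iff₀ (by positivity)]
  calc |t| = |t|⁻¹ * t ^ 2 := by field_simp; rw [sq_abs]
    _ ≤ |t|⁻¹ * (t ^ 2 + 1) ^ (k + 1) := by
      gcongr
      exact (le_add_of_nonneg_right zero_le_one).trans (le_self_pow₀ (by nlinarith) (by omega))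

lemma integral_inv_sq_add_one_pow_succ (k : ℕ) :
    ∫ t : ℝ, ((t ^ 2 + 1) ^ (k + 2))⁻¹ =
      (2 * k + 1 : ℝ) / (2 * k + 2) * ∫ t : ℝ, ((t ^ 2 + 1) ^ (k + 1))⁻¹ := by
  set F : ℝ → ℝ := fun t ↦ t * ((t ^ 2 + 1) ^ (k + 1))⁻¹
  have hderiv (t : ℝ) : HasDerivAt F ((2 * k + 2 : ℝ) * ((t ^ 2 + 1) ^ (k + 2))⁻¹ -
      (2 * k + 1) * ((t ^ 2 + 1) ^ (k + 1))⁻¹) t := by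
    have h := (hasDerivAt_id' t).fun_mul
      ((((hasDerivAt_pow 2 t).add_const 1).fun_pow (k + 1)).fun_inv (by positivity))
    refine h.congr_deriv ?_
    simp only [Nat.add_sub_cancel, Nat.cast_add, Nat.cast_one, Nat.cast_ofNat]
    field_simp
    ring
  have hF {l : Filter ℝ} (hl : Tendsto (fun t : ℝ ↦ |t|⁻¹) l (𝓝 0)) : Tendsto F l (𝓝 0) :=
    squeeze_zero_norm (abs_mul_inv_sq_add_one_pow_le k) hl
  have h := integral_of_hasDerivAt_of_tendsto hderiv
    (((integrable_inv_sq_add_one_pow (k + 1)).const_mul _).sub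
      ((integrable_inv_sq_add_one_pow k).const_mul _))
    (hF tendsto_abs_atBot_atTop.inv_tendsto_atTop) (hF tendsto_abs_atTop_atTop.inv_tendsto_atTop)
  rw [integral_sub ((integrable_inv_sq_add_one_pow (k + 1)).const_mul _)
    ((integrable_inv_sq_add_one_pow k).const_mul _), integral_const_mul, integral_const_mul,
    sub_zero, sub_eq_zero] at h
  rw [div_mul_eq_mul_div, eq_div_iff (by positivity)]
  linear_combination h

lemma integral_inv_sq_add_one_pow (k : ℕ) :
    ∫ t : ℝ, ((t ^ 2 + 1) ^ (k + 1))⁻¹ = π * Ring.multichoose (1 / 2 : ℝ) k := by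
  induction k with
  | zero => simpa [add_comm] using integral_univ_inv_one_add_sq
  | succ k ih =>
    have hk := Ring.succ_mul_multichoose_succ (1 / 2 : ℝ) k
    rw [integral_inv_sq_add_one_pow_succ, ih]
    field_simp
    linear_combination -2 * hk

noncomputable def agmIntegrand (a b t : ℝ) : ℝ := (√((t ^ 2 + a ^ 2) * (t ^ 2 + b ^ 2)))⁻¹

noncomputable def agmIntegral (a b : ℝ) : ℝ := ∫ t, agmIntegrand a b t

lemma agmIntegral_comm (a b : ℝ) : agmIntegral a b = agmIntegral b a := by
  simp only [agmIntegral, agmIntegrand, mul_comm]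

lemma integrable_inv_sq_add_sq {c : ℝ} (hc : c ≠ 0) : Integrable fun t : ℝ ↦ (t ^ 2 + c ^ 2)⁻¹ := by
  refine ((integrable_inv_one_add_sq.comp_div hc).const_mul (c ^ 2)⁻¹).congr
    (.of_forall fun t ↦ ?_)
  field_simp
  ring

lemma integral_univ_inv_sq_add_sq {c : ℝ} (hc : 0 < c) : ∫ t : ℝ, (t ^ 2 + c ^ 2)⁻¹ = π / c := by
  have h (t : ℝ) : (t ^ 2 + c ^ 2)⁻¹ = (c ^ 2)⁻¹ * (1 + (t / c) ^ 2)⁻¹ := by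
    field_simp
    ring
  simp_rw [h, integral_const_mul, Measure.integral_comp_div (fun t ↦ (1 + t ^ 2)⁻¹),
    integral_univ_inv_one_add_sq, abs_of_pos hc, smul_eq_mul]
  field_simp

lemma agmIntegrand_mem_Icc {a b : ℝ} (hb : 0 < b) (hba : b ≤ a) (t : ℝ) :
    agmIntegrand a b t ∈ Icc (t ^ 2 + a ^ 2)⁻¹ (t ^ 2 + b ^ 2)⁻¹ := by
  have hb2 : t ^ 2 + b ^ 2 ≤ t ^ 2 + a ^ 2 := by gcongr
  have hlow : t ^ 2 + b ^ 2 ≤ √((t ^ 2 + a ^ 2) * (t ^ 2 + b ^ 2)) :=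
    (le_sqrt (by positivity) (by positivity)).2 (by rw [sq]; gcongr)
  have hup : √((t ^ 2 + a ^ 2) * (t ^ 2 + b ^ 2)) ≤ t ^ 2 + a ^ 2 :=
    (sqrt_le_left (by positivity)).2 (by rw [sq (t ^ 2 + a ^ 2)]; gcongr)
  have hpos : 0 < t ^ 2 + b ^ 2 := by positivity
  exact ⟨inv_anti₀ (hpos.trans_le hlow) hup, inv_anti₀ hpos hlow⟩

lemma integrable_agmIntegrand {a b : ℝ} (hb : 0 < b) (hba : b ≤ a) :
    Integrable (agmIntegrand a b) := by
  refine (integrable_inv_sq_add_sq hb.ne').mono' (by unfold agmIntegrand; fun_prop)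
    (.of_forall fun t ↦ ?_)
  rw [Real.norm_of_nonneg (by unfold agmIntegrand; positivity)]
  exact (agmIntegrand_mem_Icc hb hba t).2

lemma agmIntegral_mem_Icc {a b : ℝ} (hb : 0 < b) (hba : b ≤ a) :
    agmIntegral a b ∈ Icc (π / a) (π / b) := by
  rw [← integral_univ_inv_sq_add_sq hb, ← integral_univ_inv_sq_add_sq (hb.trans_le hba)]
  have hint := integrable_agmIntegrand hb hba
  exact ⟨integral_mono (integrable_inv_sq_add_sq (hb.trans_le hba).ne') hint
      fun t ↦ (agmIntegrand_mem_Icc hb hba t).1,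
    integral_mono hint (integrable_inv_sq_add_sq hb.ne') fun t ↦ (agmIntegrand_mem_Icc hb hba t).2⟩

noncomputable def agmSubst (c t : ℝ) : ℝ := (t - c / t) / 2

lemma strictMonoOn_agmSubst {c : ℝ} (hc : 0 ≤ c) : StrictMonoOn (agmSubst c) (Ioi 0) := by
  intro s hs t ht hst
  have : c / t ≤ c / s := div_le_div_of_nonneg_left hc hs hst.le
  simp only [agmSubst]
  linarith

lemma agmSubst_image_Ioi {c : ℝ} (hc : 0 < c) : agmSubst c '' Ioi 0 = univ := by
  refine eq_univ_of_forall fun u ↦ ?_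
  have habs : |u| < √(u ^ 2 + c) := by
    rw [← sqrt_sq_eq_abs]
    exact sqrt_lt_sqrt (sq_nonneg u) (by linarith)
  have hpos : 0 < u + √(u ^ 2 + c) := by linarith [neg_abs_le u]
  refine ⟨u + √(u ^ 2 + c), hpos, ?_⟩
  have hsq : √(u ^ 2 + c) ^ 2 = u ^ 2 + c := sq_sqrt (by positivity)
  simp only [agmSubst]
  field_simp
  linear_combination hsq

lemma hasDerivAt_agmSubst (c : ℝ) {t : ℝ} (ht : t ≠ 0) :
    HasDerivAt (agmSubst c) ((1 + c / t ^ 2) / 2) t := by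
  have h := ((hasDerivAt_id' t).sub ((hasDerivAt_inv ht).const_mul c)).div_const 2
  refine h.congr_deriv ?_
  field_simp
  ring

lemma agmIntegrand_agmSubst {a b t : ℝ} (hab : 0 ≤ a * b) (ht : 0 < t) :
    (1 + a * b / t ^ 2) / 2 * agmIntegrand ((a + b) / 2) √(a * b) (agmSubst (a * b) t) =
      2 * agmIntegrand a b t := by
  have hP : 0 < (t ^ 2 + a ^ 2) * (t ^ 2 + b ^ 2) := by positivity
  have hprod :
      (agmSubst (a * b) t ^ 2 + ((a + b) / 2) ^ 2) * (agmSubst (a * b) t ^ 2 + √(a * b) ^ 2) =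
        (√((t ^ 2 + a ^ 2) * (t ^ 2 + b ^ 2)) * (t ^ 2 + a * b) / (4 * t ^ 2)) ^ 2 := by
    rw [div_pow _ (4 * t ^ 2), mul_pow, sq_sqrt hP.le, sq_sqrt hab, agmSubst]
    field_simp
    ring
  have hsqrtP : 0 < √((t ^ 2 + a ^ 2) * (t ^ 2 + b ^ 2)) := sqrt_pos.2 hP
  have hab' : 0 < t ^ 2 + a * b := by positivity
  rw [agmIntegrand, hprod, sqrt_sq (by positivity), agmIntegrand]
  field_simp
  ring

lemma agmIntegral_eq_two_mul_integral_Ioi (a b : ℝ) :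
    agmIntegral a b = 2 * ∫ t in Ioi 0, agmIntegrand a b t := by
  rw [agmIntegral, ← integral_comp_abs]
  simp only [agmIntegrand, sq_abs]

lemma agmIntegral_mean_step {a b : ℝ} (ha : 0 < a) (hb : 0 < b) :
    agmIntegral ((a + b) / 2) √(a * b) = agmIntegral a b := by
  have hab : 0 < a * b := mul_pos ha hb
  rw [agmIntegral, ← setIntegral_univ, ← agmSubst_image_Ioi hab,
    integral_image_eq_integral_abs_deriv_smul measurableSet_Ioi
      (fun t ht ↦ (hasDerivAt_agmSubst _ (ne_of_gt ht)).hasDerivWithinAt)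
      (strictMonoOn_agmSubst hab.le).injOn,
    agmIntegral_eq_two_mul_integral_Ioi, ← integral_const_mul]
  refine setIntegral_congr_fun measurableSet_Ioi fun t ht ↦ ?_
  rw [smul_eq_mul, abs_of_pos (by positivity), agmIntegrand_agmSubst hab.le ht]

lemma agmSeq_succ (x y : ℝ≥0) (n : ℕ) :
    agmSeq x y (n + 1) = (((x.agmSequences y n).2 : ℝ), ((x.agmSequences y n).1 : ℝ)) := by
  induction n with
  | zero => simp [agmSeq, Real.coe_sqrt]
  | succ n ih =>
    rw [agmSeq.eq_2, ih, NNReal.agmSequences_succ']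
    simp [Real.coe_sqrt, add_comm, mul_comm]

lemma agm_coe_nnreal (x y : ℝ≥0) : agm x y = NNReal.agm x y := by
  refine Tendsto.limUnder_eq ((tendsto_add_atTop_iff_nat 1).1 ?_)
  simpa only [agmSeq_succ] using NNReal.tendsto_coe.2 NNReal.tendsto_agmSequences_snd_agm

lemma agmIntegral_agmSequences {x y : ℝ≥0} (hx : 0 < x) (hy : 0 < y) (n : ℕ) :
    agmIntegral (x.agmSequences y n).2 (x.agmSequences y n).1 = agmIntegral x y := by
  induction n generalizing x y with
  | zero =>
    simpa [Real.coe_sqrt] using agmIntegral_mean_step (a := x) (b := y) hx hy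
  | succ n ih =>
    rw [NNReal.agmSequences_succ, ih (by positivity) (by positivity), agmIntegral_comm]
    simpa [Real.coe_sqrt] using agmIntegral_mean_step (a := x) (b := y) hx hy

lemma agmIntegral_eq_pi_div_agm {a b : ℝ} (ha : 0 < a) (hb : 0 < b) :
    agmIntegral a b = π / agm a b := by
  lift a to ℝ≥0 using ha.le with x
  lift b to ℝ≥0 using hb.le with y
  have hx : 0 < x := NNReal.coe_pos.1 ha
  have hy : 0 < y := NNReal.coe_pos.1 hb
  rw [agm_coe_nnreal]
  have hM : (0 : ℝ) < NNReal.agm x y := NNReal.agm_pos hx hy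
  have hmem (n : ℕ) : agmIntegral x y ∈
      Icc (π / (x.agmSequences y n).2) (π / (x.agmSequences y n).1) := by
    rw [← agmIntegral_agmSequences hx hy n]
    refine agmIntegral_mem_Icc ?_ (NNReal.coe_le_coe.2 (NNReal.agmSequences_fst_le_snd n n))
    exact NNReal.coe_pos.2 ((NNReal.sqrt_pos.2 (mul_pos hx hy)).trans_le
      (NNReal.agmSequences_fst_monotone (Nat.zero_le n)))
  have hlim {u : ℕ → ℝ≥0} (hu : Tendsto u atTop (𝓝 (NNReal.agm x y))) :
      Tendsto (fun n ↦ π / u n) atTop (𝓝 (π / NNReal.agm x y)) :=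
    tendsto_const_nhds.div (NNReal.tendsto_coe.2 hu) hM.ne'
  exact le_antisymm (ge_of_tendsto' (hlim NNReal.tendsto_agmSequences_fst_agm) fun n ↦ (hmem n).2)
    (le_of_tendsto' (hlim NNReal.tendsto_agmSequences_snd_agm) fun n ↦ (hmem n).1)

lemma hasSum_agmIntegrand_one {x : ℝ} (hx : |x| < 1) (t : ℝ) :
    HasSum (fun k ↦ Ring.multichoose (1 / 2 : ℝ) k * x ^ (2 * k) * ((t ^ 2 + 1) ^ (k + 1))⁻¹)
      (agmIntegrand 1 √(1 - x ^ 2) t) := by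
  have ht : 0 < t ^ 2 + 1 := by positivity
  have hx2 : x ^ 2 < 1 := (sq_lt_one_iff_abs_lt_one x).2 hx
  have hy : |x ^ 2 / (t ^ 2 + 1)| < 1 := by
    rw [abs_of_nonneg (by positivity), div_lt_one ht]
    nlinarith
  have hfactor : (t ^ 2 + 1 ^ 2) * (t ^ 2 + √(1 - x ^ 2) ^ 2) =
      (t ^ 2 + 1) ^ 2 * (1 - x ^ 2 / (t ^ 2 + 1)) := by
    rw [sq_sqrt (by linarith)]
    field_simp
    ring
  rw [agmIntegrand, hfactor, sqrt_mul (by positivity), sqrt_sq ht.le, mul_inv]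
  refine ((hasSum_multichoose_half_mul_pow hy).mul_left _).congr_fun fun k ↦ ?_
  rw [pow_mul, div_pow]
  field_simp
  ring

lemma hasSum_agmIntegral_one {x : ℝ} (hx : |x| < 1) :
    HasSum (fun k ↦ π * (Ring.multichoose (1 / 2 : ℝ) k ^ 2 * x ^ (2 * k)))
      (agmIntegral 1 √(1 - x ^ 2)) := by
  set F : ℕ → ℝ → ℝ := fun k t ↦
    Ring.multichoose (1 / 2 : ℝ) k * x ^ (2 * k) * ((t ^ 2 + 1) ^ (k + 1))⁻¹
  have hF_nonneg (k : ℕ) (t : ℝ) : 0 ≤ F k t := by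
    simp only [F, Ring.multichoose_half, pow_mul]
    positivity
  have hc : 0 < √(1 - x ^ 2) := sqrt_pos.2 (by nlinarith [(sq_lt_one_iff_abs_lt_one x).2 hx])
  have hc1 : √(1 - x ^ 2) ≤ 1 := sqrt_le_one.2 (by nlinarith)
  have h := hasSum_integral_of_dominated_convergence F
    (fun k ↦ ((integrable_inv_sq_add_one_pow k).const_mul _).aestronglyMeasurable)
    (fun k ↦ .of_forall fun t ↦ (Real.norm_of_nonneg (hF_nonneg k t)).le)
    (.of_forall fun t ↦ (hasSum_agmIntegrand_one hx t).summable)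
    ((integrable_agmIntegrand hc hc1).congr
      (.of_forall fun t ↦ (hasSum_agmIntegrand_one hx t).tsum_eq.symm))
    (.of_forall (hasSum_agmIntegrand_one hx))
  refine h.congr_fun fun k ↦ ?_
  rw [integral_const_mul, integral_inv_sq_add_one_pow]
  ring

theorem inv_agm_eq_hypergeometric_series (x : ℝ) (hx : |x| < 1) :
    1 / agm (1 + x) (1 - x) =
      ∑' k : ℕ, (((2 * k).choose k : ℝ) / 4 ^ k) ^ 2 * x ^ (2 * k) := by
  obtain ⟨hx₁, hx₂⟩ := abs_lt.mp hx
  have hK : agmIntegral 1 √(1 - x ^ 2) = π / agm (1 + x) (1 - x) := by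
    have hmean := agmIntegral_mean_step (a := 1 + x) (b := 1 - x) (by linarith) (by linarith)
    rw [show (1 + x + (1 - x)) / 2 = 1 by ring, show (1 + x) * (1 - x) = 1 - x ^ 2 by ring]
      at hmean
    rw [hmean, agmIntegral_eq_pi_div_agm (by linarith) (by linarith)]
  have hS := (hasSum_agmIntegral_one hx).tsum_eq
  rw [tsum_mul_left, hK, ← mul_one_div π] at hS
  simp only [Ring.multichoose_half, Nat.centralBinom_eq_two_mul_choose] at hS
  exact (mul_left_cancel₀ pi_ne_zero hS).symm
end

section
/- Define y : (−1,1) → ℝ by y(x) = Σ_{k=0}^∞ ((2k choose k)/4^k)² · x^{2k}. Then y is twice differentiable on (−1,1) and satisfies the differential equation (x³ − x)·y''(x) + (3x² − 1)·y'(x) + x·y(x) = 0 for all x with |x| < 1. -/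
/-!
Write `y(x) = F(x²)` with `F(t) = ∑ aₖ tᵏ = ₂F₁(1/2, 1/2; 1; t)`, where `aₖ = ((2k choose k)/4ᵏ)²`.
By the chain rule the equation for `y` is `x` times the hypergeometric equation
`4t(t - 1) F'' + (8t - 4) F' + F = 0`. Since `|aₖ| ≤ 1`, the series for `F` may be differentiated
termwise on `(-1, 1)`, and then the hypergeometric equation telescopes: with
`Bₖ = (2k)² aₖ tᵏ⁻¹`, its `k`-th term is `Bₖ₊₁ - Bₖ`, because `(2k + 2)² aₖ₊₁ = (2k + 1)² aₖ`.
-/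

/-- The hypergeometric-type series `y(x) = ∑ ((2k choose k)/4^k)² x^{2k}`. -/
noncomputable def gaussSeries (x : ℝ) : ℝ :=
  ∑' k : ℕ, (((2 * k).choose k : ℝ) / 4 ^ k) ^ 2 * x ^ (2 * k)

open Topology

section ShiftedPowerSeries

variable {𝕜 : Type*} [RCLike 𝕜] {c : ℕ → 𝕜} {C : ℝ} {m : ℕ}

lemma norm_pow_sub_le_div {w : 𝕜} {r : ℝ} (hr0 : 0 < r) (hr1 : r ≤ 1) (hw : ‖w‖ ≤ r)
    (k j : ℕ) : ‖w ^ (k - j)‖ ≤ r ^ k / r ^ j := by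
  rw [norm_pow, le_div_iff₀ (by positivity)]
  calc ‖w‖ ^ (k - j) * r ^ j ≤ r ^ (k - j) * r ^ j := by gcongr
    _ = r ^ (k - j + j) := (pow_add _ _ _).symm
    _ ≤ r ^ k := pow_le_pow_of_le_one hr0.le hr1 (by omega)

lemma summable_pow_mul_geometric_div {r : ℝ} (hr0 : 0 ≤ r) (hr1 : r < 1) (C : ℝ) (m j : ℕ) :
    Summable fun k : ℕ => C * ((k : ℝ) ^ m * r ^ k) / r ^ j :=
  ((summable_pow_mul_geometric_of_norm_lt_one m
    (by rwa [Real.norm_of_nonneg hr0])).mul_left C).div_const _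

lemma norm_mul_pow_sub_le (hc : ∀ k, ‖c k‖ ≤ C * (k : ℝ) ^ m) {w : 𝕜} {r : ℝ} (hr0 : 0 < r)
    (hr1 : r ≤ 1) (hw : ‖w‖ ≤ r) (k j : ℕ) :
    ‖c k * w ^ (k - j)‖ ≤ C * ((k : ℝ) ^ m * r ^ k) / r ^ j :=
  calc ‖c k * w ^ (k - j)‖ ≤ C * (k : ℝ) ^ m * (r ^ k / r ^ j) := by
        rw [norm_mul]
        exact mul_le_mul (hc k) (norm_pow_sub_le_div hr0 hr1 hw k j) (norm_nonneg _)
          ((norm_nonneg _).trans (hc k))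
    _ = C * ((k : ℝ) ^ m * r ^ k) / r ^ j := by ring

lemma norm_natCast_sub_mul_le (hc : ∀ k, ‖c k‖ ≤ C * (k : ℝ) ^ m) (j k : ℕ) :
    ‖((k - j : ℕ) : 𝕜) * c k‖ ≤ C * (k : ℝ) ^ (m + 1) := by
  rw [norm_mul, RCLike.norm_natCast]
  calc ((k - j : ℕ) : ℝ) * ‖c k‖ ≤ k * (C * (k : ℝ) ^ m) :=
        mul_le_mul (by exact_mod_cast k.sub_le j) (hc k) (norm_nonneg _) k.cast_nonneg
    _ = C * (k : ℝ) ^ (m + 1) := by ring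

theorem summable_mul_pow_sub (hc : ∀ k, ‖c k‖ ≤ C * (k : ℝ) ^ m) (j : ℕ) {z : 𝕜}
    (hz : ‖z‖ < 1) : Summable fun k => c k * z ^ (k - j) := by
  obtain ⟨r, hzr, hr1⟩ := exists_between hz
  have hr0 : 0 < r := (norm_nonneg z).trans_lt hzr
  exact (summable_pow_mul_geometric_div hr0.le hr1 C m j).of_norm_bounded
    fun k => norm_mul_pow_sub_le hc hr0 hr1.le hzr.le k j

theorem hasDerivAt_tsum_mul_pow_sub (hc : ∀ k, ‖c k‖ ≤ C * (k : ℝ) ^ m) (j : ℕ) {z : 𝕜}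
    (hz : ‖z‖ < 1) :
    HasDerivAt (fun w => ∑' k, c k * w ^ (k - j))
      (∑' k, ((k - j : ℕ) : 𝕜) * c k * z ^ (k - (j + 1))) z := by
  obtain ⟨r, hzr, hr1⟩ := exists_between hz
  have hr0 : 0 < r := (norm_nonneg z).trans_lt hzr
  have hderiv (k : ℕ) (w : 𝕜) : HasDerivAt (fun w => c k * w ^ (k - j))
      (((k - j : ℕ) : 𝕜) * c k * w ^ (k - (j + 1))) w := by
    refine ((hasDerivAt_pow (k - j) w).const_mul (c k)).congr_deriv ?_
    rw [Nat.sub_sub]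
    ring
  exact hasDerivAt_tsum_of_isPreconnected
    (summable_pow_mul_geometric_div hr0.le hr1 C (m + 1) (j + 1)) Metric.isOpen_ball
    (convex_ball 0 r).isPreconnected (fun k w _ => hderiv k w)
    (fun k w hw => norm_mul_pow_sub_le (norm_natCast_sub_mul_le hc j) hr0 hr1.le
      (mem_ball_zero_iff.1 hw).le k (j + 1))
    (Metric.mem_ball_self hr0) (summable_mul_pow_sub hc j (by simp)) (mem_ball_zero_iff.2 hzr)

end ShiftedPowerSeries

theorem Summable.tsum_succ_sub {E : Type*} [AddCommGroup E] [TopologicalSpace E]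
    [IsTopologicalAddGroup E] [T2Space E] {f : ℕ → E} (hf : Summable f) :
    ∑' k, (f (k + 1) - f k) = -f 0 := by
  rw [((summable_nat_add_iff 1).2 hf).tsum_sub hf, hf.tsum_eq_zero_add]
  abel

lemma abs_sq_lt_one {α : Type*} [Ring α] [LinearOrder α] [IsStrictOrderedRing α] {a : α}
    (ha : |a| < 1) : |a ^ 2| < 1 := by
  rwa [abs_sq, sq_lt_one_iff_abs_lt_one]

namespace GaussSeries

noncomputable def coeff (k : ℕ) : ℝ := (((2 * k).choose k : ℝ) / 4 ^ k) ^ 2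

lemma norm_coeff_le_one (k : ℕ) : ‖coeff k‖ ≤ 1 := by
  have h : ((2 * k).choose k : ℝ) ≤ 4 ^ k := by
    exact_mod_cast (Nat.centralBinom_eq_two_mul_choose k) ▸ Nat.centralBinom_le_four_pow k
  rw [coeff, Real.norm_of_nonneg (sq_nonneg _)]
  exact pow_le_one₀ (by positivity) ((div_le_one (by positivity)).2 h)

lemma norm_natCast_mul_coeff_le (k : ℕ) : ‖(k : ℝ) * coeff k‖ ≤ 1 * (k : ℝ) ^ 1 := by
  rw [norm_mul, Real.norm_natCast, one_mul, pow_one]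
  exact mul_le_of_le_one_right k.cast_nonneg (norm_coeff_le_one k)

lemma norm_sq_mul_coeff_le (k : ℕ) : ‖(2 * (k : ℝ)) ^ 2 * coeff k‖ ≤ 4 * (k : ℝ) ^ 2 := by
  rw [norm_mul, Real.norm_of_nonneg (sq_nonneg _), mul_pow]
  norm_num
  exact mul_le_of_le_one_right (by positivity) (norm_coeff_le_one k)

lemma coeff_succ_mul (k : ℕ) :
    coeff (k + 1) * (2 * ((k : ℝ) + 1)) ^ 2 = coeff k * (2 * k + 1) ^ 2 := by
  have h : ((k : ℝ) + 1) * (2 * (k + 1)).choose (k + 1) = 2 * (2 * k + 1) * (2 * k).choose k := by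
    exact_mod_cast Nat.succ_mul_centralBinom_succ k
  have hroot : ((2 * (k + 1)).choose (k + 1) : ℝ) * (2 * (k + 1)) / 4 ^ (k + 1)
      = (2 * k).choose k * (2 * k + 1) / 4 ^ k := by
    rw [pow_succ]
    field_simp
    linear_combination 2 * h
  calc coeff (k + 1) * (2 * ((k : ℝ) + 1)) ^ 2
      = (((2 * (k + 1)).choose (k + 1) : ℝ) * (2 * (k + 1)) / 4 ^ (k + 1)) ^ 2 := by
        rw [coeff]; ring
    _ = coeff k * (2 * k + 1) ^ 2 := by rw [hroot, coeff]; ring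

noncomputable def hypergeom (t : ℝ) : ℝ := ∑' k, coeff k * t ^ k

/- The termwise first and second derivatives of `hypergeom`, in the shape produced by
`hasDerivAt_tsum_mul_pow_sub`. -/

noncomputable def hypergeom₁ (t : ℝ) : ℝ := ∑' k : ℕ, (k : ℝ) * coeff k * t ^ (k - 1)

noncomputable def hypergeom₂ (t : ℝ) : ℝ :=
  ∑' k : ℕ, ((k - 1 : ℕ) : ℝ) * ((k : ℝ) * coeff k) * t ^ (k - 2)

variable {t : ℝ}

lemma hasDerivAt_hypergeom (ht : |t| < 1) : HasDerivAt hypergeom (hypergeom₁ t) t := by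
  have h := hasDerivAt_tsum_mul_pow_sub (c := coeff) (C := 1) (m := 0)
    (by simpa using norm_coeff_le_one) 0 (by rwa [Real.norm_eq_abs])
  simp only [Nat.sub_zero, zero_add] at h
  exact h

lemma hasDerivAt_hypergeom₁ (ht : |t| < 1) : HasDerivAt hypergeom₁ (hypergeom₂ t) t :=
  hasDerivAt_tsum_mul_pow_sub norm_natCast_mul_coeff_le 1 (by rwa [Real.norm_eq_abs])

lemma hypergeom_ode (ht : |t| < 1) :
    4 * t * (t - 1) * hypergeom₂ t + (8 * t - 4) * hypergeom₁ t + hypergeom t = 0 := by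
  rw [← Real.norm_eq_abs] at ht
  have s₀ : Summable fun k => coeff k * t ^ k := by
    simpa using summable_mul_pow_sub (C := 1) (m := 0) (by simpa using norm_coeff_le_one) 0 ht
  have s₁ := summable_mul_pow_sub norm_natCast_mul_coeff_le 1 ht
  have s₂ := summable_mul_pow_sub (norm_natCast_sub_mul_le norm_natCast_mul_coeff_le 1) 2 ht
  set B : ℕ → ℝ := fun k => (2 * (k : ℝ)) ^ 2 * coeff k * t ^ (k - 1)
  have hB : Summable B := summable_mul_pow_sub norm_sq_mul_coeff_le 1 ht
  have hB_succ (k : ℕ) : B (k + 1) = (2 * k + 1) ^ 2 * coeff k * t ^ k := by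
    simp only [B, Nat.cast_add_one, Nat.add_sub_cancel]
    linear_combination t ^ k * coeff_succ_mul k
  have hterm (k : ℕ) : 4 * t * (t - 1) * (((k - 1 : ℕ) : ℝ) * (k * coeff k) * t ^ (k - 2))
      + (8 * t - 4) * (k * coeff k * t ^ (k - 1)) + coeff k * t ^ k = B (k + 1) - B k := by
    rw [hB_succ]
    rcases k with _ | _ | n
    · simp [B]
    · simp only [B, zero_add, Nat.sub_self, Nat.cast_zero, Nat.cast_one]
      ring
    · simp only [B]
      push_cast
      simp only [pow_succ]
      ring
  rw [hypergeom₂, hypergeom₁, hypergeom, ← tsum_mul_left, ← tsum_mul_left,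
    ← (s₂.mul_left _).tsum_add (s₁.mul_left _),
    ← ((s₂.mul_left _).add (s₁.mul_left _)).tsum_add s₀, tsum_congr hterm, hB.tsum_succ_sub]
  simp [B]

end GaussSeries

section

open GaussSeries

variable {x : ℝ}

lemma gaussSeries_eq_hypergeom_sq (x : ℝ) : gaussSeries x = hypergeom (x ^ 2) := by
  simp only [gaussSeries, hypergeom, coeff, pow_mul]

lemma hasDerivAt_gaussSeries (hx : |x| < 1) :
    HasDerivAt gaussSeries (2 * x * hypergeom₁ (x ^ 2)) x := by
  rw [show gaussSeries = hypergeom ∘ (· ^ 2) from funext gaussSeries_eq_hypergeom_sq]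
  refine ((hasDerivAt_hypergeom (abs_sq_lt_one hx)).comp (h := (· ^ 2)) x
    (hasDerivAt_pow 2 x)).congr_deriv ?_
  push_cast
  ring

lemma hasDerivAt_deriv_gaussSeries (hx : |x| < 1) :
    HasDerivAt (deriv gaussSeries)
      (2 * hypergeom₁ (x ^ 2) + 4 * x ^ 2 * hypergeom₂ (x ^ 2)) x := by
  have hderiv : deriv gaussSeries =ᶠ[𝓝 x] fun z => 2 * z * hypergeom₁ (z ^ 2) := by
    filter_upwards [(isOpen_lt continuous_abs continuous_const).mem_nhds hx] with z hz
    exact (hasDerivAt_gaussSeries hz).deriv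
  have h₁ := (hasDerivAt_hypergeom₁ (abs_sq_lt_one hx)).comp (h := (· ^ 2)) x
    (hasDerivAt_pow 2 x)
  refine ((((hasDerivAt_id x).const_mul 2).mul h₁).congr_deriv ?_).congr_of_eventuallyEq hderiv
  simp only [Function.comp_apply, id]
  push_cast
  ring

end

theorem gaussSeries_satisfies_ode :
    ∀ x : ℝ, |x| < 1 →
      DifferentiableAt ℝ gaussSeries x ∧
      DifferentiableAt ℝ (deriv gaussSeries) x ∧
      (x ^ 3 - x) * deriv (deriv gaussSeries) x +
        (3 * x ^ 2 - 1) * deriv gaussSeries x + x * gaussSeries x = 0 := by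
  intro x hx
  have h₁ := hasDerivAt_gaussSeries hx
  have h₂ := hasDerivAt_deriv_gaussSeries hx
  refine ⟨h₁.differentiableAt, h₂.differentiableAt, ?_⟩
  rw [h₂.deriv, h₁.deriv, gaussSeries_eq_hypergeom_sq]
  linear_combination x * GaussSeries.hypergeom_ode (abs_sq_lt_one hx)
end

section
/- For every complex number q with |q| < 1, θ₃(q)² · θ₄(q)² = θ₄(q²)⁴, where θ₃(q) = Σ_{n∈ℤ} q^{n²} and θ₄(q) = Σ_{n∈ℤ} (−1)ⁿ q^{n²}. In particular, for 0 < q < 1 real, √(θ₃(q)² θ₄(q)²) = θ₄(q²)². -/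
/-!
Multiplying out, `θ₃(q) θ₄(q) = ∑_{m,n} (-1)ⁿ q^{m² + n²}`. Swapping `m` and `n` multiplies a
term by `(-1)^{m+n}`, so the terms with `m + n` odd cancel in pairs. The remaining indices are
`(m, n) = (j + k, j - k)`, for which `m² + n² = 2j² + 2k²` and `(-1)ⁿ = (-1)^j (-1)^k`: what is
left is the Cauchy square of `θ₄(q²)`. This is valid in any complete normed field of
characteristic zero, which gives the complex and the real case at once.
-/

/-- Jacobi theta function `θ₃(q) = ∑_{n ∈ ℤ} q^{n²}`. -/
noncomputable def theta3 (q : ℂ) : ℂ := ∑' n : ℤ, q ^ (n ^ 2)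

/-- Jacobi theta function `θ₄(q) = ∑_{n ∈ ℤ} (−1)ⁿ q^{n²}`. -/
noncomputable def theta4 (q : ℂ) : ℂ := ∑' n : ℤ, (-1 : ℂ) ^ n * q ^ (n ^ 2)

/-- Real-valued Jacobi theta function `θ₃` for real `q`. -/
noncomputable def theta3Real (q : ℝ) : ℝ := ∑' n : ℤ, q ^ (n ^ 2)

/-- Real-valued Jacobi theta function `θ₄` for real `q`. -/
noncomputable def theta4Real (q : ℝ) : ℝ := ∑' n : ℤ, (-1 : ℝ) ^ n * q ^ (n ^ 2)

open Function

lemma zpow_sq_add_sq {G₀ : Type*} [GroupWithZero G₀] (q : G₀) (a b : ℤ) :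
    q ^ (a ^ 2 + b ^ 2) = q ^ (a ^ 2) * q ^ (b ^ 2) := by
  refine zpow_add' (Or.inr ?_)
  rcases eq_or_ne (a ^ 2 + b ^ 2) 0 with h | h
  · exact Or.inr ((add_eq_zero_iff_of_nonneg (sq_nonneg a) (sq_nonneg b)).1 h)
  · exact Or.inl h

lemma neg_one_zpow_sub_eq_mul {K : Type*} [DivisionRing K] (m n : ℤ) :
    (-1 : K) ^ (m - n) = (-1) ^ m * (-1) ^ n := by
  rw [zpow_sub₀ (by norm_num), div_eq_mul_inv, ← inv_zpow, inv_neg_one]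

section NormedDivisionRing

variable {K : Type*} [NormedDivisionRing K] {q : K}

lemma summable_norm_zpow_sq (hq : ‖q‖ < 1) : Summable fun n : ℤ => ‖q ^ (n ^ 2)‖ := by
  have hgeom : Summable fun n : ℤ => ‖q‖ ^ n.natAbs := by
    apply Summable.of_nat_of_neg <;> simpa using summable_geometric_of_lt_one (norm_nonneg q) hq
  refine hgeom.of_nonneg_of_le (fun n => norm_nonneg _) fun n => ?_
  rw [norm_zpow, ← Int.natAbs_sq n]
  norm_cast
  exact pow_le_pow_of_le_one (norm_nonneg q) hq.le (Nat.le_self_pow two_ne_zero _)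

lemma summable_norm_neg_one_zpow_mul_zpow_sq (hq : ‖q‖ < 1) :
    Summable fun n : ℤ => ‖(-1) ^ n * q ^ (n ^ 2)‖ := by
  simpa [norm_mul, norm_zpow] using summable_norm_zpow_sq hq

end NormedDivisionRing

theorem tsum_prod_eq_tsum_add_sub_of_apply_swap {K : Type*} [Field K] [CharZero K]
    [TopologicalSpace K] [IsTopologicalRing K] [T2Space K] {f : ℤ × ℤ → K} (hf : Summable f)
    (hswap : ∀ p, f p.swap = (-1) ^ (p.1 + p.2) * f p) :
    ∑' p, f p = ∑' p : ℤ × ℤ, f (p.1 + p.2, p.1 - p.2) := by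
  have hsym : ∑' p, f p = ∑' p, (f p + f p.swap) / 2 := by
    have hswap_sum : ∑' p : ℤ × ℤ, f p.swap = ∑' p, f p := (Equiv.prodComm ℤ ℤ).tsum_eq f
    rw [tsum_div_const,
      hf.tsum_add (g := fun p : ℤ × ℤ => f p.swap) ((Equiv.prodComm ℤ ℤ).summable_iff.2 hf),
      hswap_sum]
    ring
  have hinj : Injective fun p : ℤ × ℤ => (p.1 + p.2, p.1 - p.2) := by
    intro p p' h
    simp only [Prod.mk.injEq] at h
    ext <;> omega
  have hsupp : support (fun p => (f p + f p.swap) / 2) ⊆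
      Set.range fun p : ℤ × ℤ => (p.1 + p.2, p.1 - p.2) := by
    rintro ⟨m, n⟩ hp
    obtain ⟨j, hj⟩ : Even (m + n) := by
      by_contra hodd
      apply hp
      simp only
      rw [hswap, (Int.not_even_iff_odd.1 hodd).neg_one_zpow]
      ring
    exact ⟨(j, m - j), by ext <;> simp only <;> omega⟩
  rw [hsym, ← hinj.tsum_eq hsupp]
  refine tsum_congr fun p => ?_
  rw [hswap, Even.neg_one_zpow ⟨p.1, by ring⟩]
  ring

theorem tsum_zpow_sq_mul_tsum_neg_one_zpow_mul_zpow_sq {K : Type*} [NormedField K]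
    [CompleteSpace K] [CharZero K] {q : K} (hq : ‖q‖ < 1) :
    (∑' n : ℤ, q ^ (n ^ 2)) * ∑' n : ℤ, (-1) ^ n * q ^ (n ^ 2) =
      (∑' n : ℤ, (-1) ^ n * (q ^ 2) ^ (n ^ 2)) ^ 2 := by
  have hq2 : ‖q ^ 2‖ < 1 := by
    rw [norm_pow]
    exact pow_lt_one₀ (norm_nonneg _) hq two_ne_zero
  have hswap : ∀ p : ℤ × ℤ, q ^ (p.2 ^ 2) * ((-1) ^ p.1 * q ^ (p.1 ^ 2)) =
      (-1) ^ (p.1 + p.2) * (q ^ (p.1 ^ 2) * ((-1) ^ p.2 * q ^ (p.2 ^ 2))) := by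
    rintro ⟨m, n⟩
    have hsign : (-1 : K) ^ m = (-1) ^ (m + n) * (-1) ^ n := by
      rw [← neg_one_zpow_sub_eq_mul, add_sub_cancel_right]
    rw [hsign]
    ring
  have hdiag : ∀ j k : ℤ, q ^ ((j + k) ^ 2) * ((-1) ^ (j - k) * q ^ ((j - k) ^ 2)) =
      ((-1) ^ j * (q ^ 2) ^ (j ^ 2)) * ((-1) ^ k * (q ^ 2) ^ (k ^ 2)) := by
    intro j k
    have hexp : q ^ ((j + k) ^ 2) * q ^ ((j - k) ^ 2) = (q ^ 2) ^ (j ^ 2) * (q ^ 2) ^ (k ^ 2) := by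
      rw [← zpow_sq_add_sq, ← zpow_sq_add_sq, ← zpow_natCast, ← zpow_mul]
      ring_nf
    rw [neg_one_zpow_sub_eq_mul]
    linear_combination (-1 : K) ^ j * (-1) ^ k * hexp
  have h3 := summable_norm_zpow_sq hq
  have h4 := summable_norm_neg_one_zpow_mul_zpow_sq hq
  have h4sq := summable_norm_neg_one_zpow_mul_zpow_sq hq2
  have hprod := summable_mul_of_summable_norm h3 h4
  rw [tsum_mul_tsum_of_summable_norm h3 h4, sq, tsum_mul_tsum_of_summable_norm h4sq h4sq,
    tsum_prod_eq_tsum_add_sub_of_apply_swap hprod hswap]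
  exact tsum_congr fun p => hdiag p.1 p.2

theorem theta3_sq_mul_theta4_sq :
    (∀ q : ℂ, ‖q‖ < 1 →
      theta3 q ^ 2 * theta4 q ^ 2 = theta4 (q ^ 2) ^ 4) ∧
    (∀ q : ℝ, 0 < q → q < 1 →
      Real.sqrt (theta3Real q ^ 2 * theta4Real q ^ 2) = theta4Real (q ^ 2) ^ 2) := by
  constructor
  · intro q hq
    rw [← mul_pow, theta3, theta4, theta4, tsum_zpow_sq_mul_tsum_neg_one_zpow_mul_zpow_sq hq,
      ← pow_mul]
  · intro q hq0 hq1
    have hq : ‖q‖ < 1 := by rwa [Real.norm_of_nonneg hq0.le]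
    rw [← mul_pow, theta3Real, theta4Real, theta4Real,
      tsum_zpow_sq_mul_tsum_neg_one_zpow_mul_zpow_sq hq, Real.sqrt_sq (sq_nonneg _)]
end

section
/- For every real q with 0 < q < 1, M(θ₃(q)², θ₄(q)²) = 1, where M is the arithmetic–geometric mean and θ₃, θ₄ are the Jacobi theta functions (which take positive real values for 0 < q < 1). -/
open Filter Topology

/-! With `thetaSeries s q = ∑ sⁿ q^(n²)`, so that `θ₃ = thetaSeries 1` and
`θ₄ = thetaSeries (-1)`, the substitution `(m, n) = (u + v, u - v)` on the lattice points with
`m + n` even gives the duplication formula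
`θ(s, q) θ(t, q) + θ(-s, q) θ(-t, q) = 2 θ(st, q²) θ(s/t, q²)` for `|s| = |t| = 1`;
the points with `m + n` odd cancel between the two products. The cases `s = t = 1` and
`s = -t = 1` say that `(θ₃(q)², θ₄(q)²) ↦ (θ₃(q²)², θ₄(q²)²)` is one AGM step (no sign
condition on `θ₄` is needed, since `θ₃(q) θ₄(q) = θ₄(q²)²` is a square). Hence the AGM
sequence is `(θ₃(q^(2ⁿ))², θ₄(q^(2ⁿ))²)`, which tends to `θ₃(0)² = 1`. -/

lemma zpow_add_sq_mul_zpow_sub_sq {G₀ : Type*} [CommGroupWithZero G₀] (a : G₀) (u v : ℤ) :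
    a ^ ((u + v) ^ 2) * a ^ ((u - v) ^ 2) = (a ^ 2) ^ (u ^ 2) * (a ^ 2) ^ (v ^ 2) := by
  have zpow_add_of_nonneg : ∀ m n : ℤ, 0 ≤ m → 0 ≤ n → a ^ (m + n) = a ^ m * a ^ n :=
    fun m n hm hn => zpow_add' (Or.inr (by omega))
  rw [← zpow_add_of_nonneg _ _ (sq_nonneg _) (sq_nonneg _), ← zpow_natCast a 2, ← zpow_mul,
    ← zpow_mul, ← zpow_add_of_nonneg _ _ (by positivity) (by positivity)]
  congr 1
  push_cast
  ring

lemma neg_zpow_mul_neg_zpow {K : Type*} [Field K] (a b : K) (m n : ℤ) :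
    (-a) ^ m * (-b) ^ n = (-1) ^ (m + n) * (a ^ m * b ^ n) := by
  rw [neg_eq_neg_one_mul a, neg_eq_neg_one_mul b, mul_zpow, mul_zpow, zpow_add₀ (by norm_num)]
  ring

lemma range_add_sub :
    Set.range (fun p : ℤ × ℤ => (p.1 + p.2, p.1 - p.2)) = {p | Even (p.1 + p.2)} := by
  ext ⟨m, n⟩
  constructor
  · rintro ⟨⟨u, v⟩, h⟩
    simp only [Prod.mk.injEq] at h
    exact ⟨u, by omega⟩
  · rintro ⟨u, hu⟩
    exact ⟨(u, m - u), Prod.ext (by simp) (by simp only at hu ⊢; omega)⟩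

lemma injective_add_sub : Function.Injective (fun p : ℤ × ℤ => (p.1 + p.2, p.1 - p.2)) := by
  rintro ⟨u, v⟩ ⟨u', v'⟩ h
  simp only [Prod.mk.injEq] at h ⊢
  omega

noncomputable def thetaSeries (s q : ℝ) : ℝ := ∑' n : ℤ, s ^ n * q ^ (n ^ 2)

lemma theta3Real_eq_thetaSeries (q : ℝ) : theta3Real q = thetaSeries 1 q := by
  simp only [theta3Real, thetaSeries, one_zpow, one_mul]

lemma theta4Real_eq_thetaSeries (q : ℝ) : theta4Real q = thetaSeries (-1) q := rfl

section ThetaSeries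

variable {s t q : ℝ}

lemma summable_zpow_sq (h0 : 0 ≤ q) (h1 : q < 1) : Summable fun n : ℤ => q ^ (n ^ 2) := by
  have hnat : Summable fun n : ℕ => q ^ ((n : ℤ) ^ 2) := by
    refine Summable.of_nonneg_of_le (fun n => by positivity) (fun n => ?_)
      (summable_geometric_of_lt_one h0 h1)
    rw [← Nat.cast_pow, zpow_natCast]
    exact pow_le_pow_of_le_one h0 h1.le (Nat.le_self_pow two_ne_zero n)
  exact Summable.of_nat_of_neg hnat (by simpa only [neg_sq] using hnat)

lemma summable_norm_thetaSeries_term (hs : |s| = 1) (hq : |q| < 1) :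
    Summable fun n : ℤ => ‖s ^ n * q ^ (n ^ 2)‖ := by
  simpa only [norm_mul, norm_zpow, Real.norm_eq_abs, hs, one_zpow, one_mul]
    using summable_zpow_sq (abs_nonneg q) hq

lemma hasSum_thetaSeries_mul_thetaSeries (hs : |s| = 1) (ht : |t| = 1) (hq : |q| < 1) :
    HasSum (fun p : ℤ × ℤ => s ^ p.1 * q ^ (p.1 ^ 2) * (t ^ p.2 * q ^ (p.2 ^ 2)))
      (thetaSeries s q * thetaSeries t q) := by
  have hs := summable_norm_thetaSeries_term hs hq
  have ht := summable_norm_thetaSeries_term ht hq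
  rw [thetaSeries, thetaSeries, tsum_mul_tsum_of_summable_norm hs ht]
  exact (summable_mul_of_summable_norm hs ht).hasSum

theorem thetaSeries_mul_add_thetaSeries_neg_mul (hs : |s| = 1) (ht : |t| = 1) (hq : |q| < 1) :
    thetaSeries s q * thetaSeries t q + thetaSeries (-s) q * thetaSeries (-t) q =
      2 * (thetaSeries (s * t) (q ^ 2) * thetaSeries (s / t) (q ^ 2)) := by
  have hs0 : s ≠ 0 := by rintro rfl; simp at hs
  have ht0 : t ≠ 0 := by rintro rfl; simp at ht
  have hsum := (hasSum_thetaSeries_mul_thetaSeries hs ht hq).add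
    (hasSum_thetaSeries_mul_thetaSeries (s := -s) (t := -t) (by rwa [abs_neg]) (by rwa [abs_neg])
      hq)
  have hsum_sq := (hasSum_thetaSeries_mul_thetaSeries (s := s * t) (t := s / t) (q := q ^ 2)
    (by rw [abs_mul, hs, ht, one_mul]) (by rw [abs_div, hs, ht, div_one])
    (by rw [abs_pow]; exact pow_lt_one₀ (abs_nonneg q) hq two_ne_zero)).mul_left 2
  refine hsum.unique ?_
  rw [← injective_add_sub.hasSum_iff]
  · refine hsum_sq.congr_fun fun ⟨u, v⟩ => ?_
    have h_even : Even ((u + v) + (u - v)) := ⟨u, by ring⟩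
    calc _ = (s ^ (u + v) * t ^ (u - v) + (-s) ^ (u + v) * (-t) ^ (u - v))
                * (q ^ ((u + v) ^ 2) * q ^ ((u - v) ^ 2)) := by
            simp only [Function.comp_apply]; ring
      _ = _ := by
        rw [neg_zpow_mul_neg_zpow, h_even.neg_one_zpow, zpow_add_sq_mul_zpow_sub_sq,
          zpow_add₀ hs0, zpow_sub₀ ht0, mul_zpow, div_zpow]
        ring
  · rintro ⟨m, n⟩ hmn
    rw [range_add_sub, Set.mem_ofPred_eq, Int.not_even_iff_odd] at hmn
    calc _ = (s ^ m * t ^ n + (-s) ^ m * (-t) ^ n) * (q ^ (m ^ 2) * q ^ (n ^ 2)) := by ring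
      _ = 0 := by rw [neg_zpow_mul_neg_zpow, hmn.neg_one_zpow]; ring

lemma theta3Real_sq_add_theta4Real_sq (hq : |q| < 1) :
    theta3Real q ^ 2 + theta4Real q ^ 2 = 2 * theta3Real (q ^ 2) ^ 2 := by
  have h := thetaSeries_mul_add_thetaSeries_neg_mul (abs_one (α := ℝ)) abs_one hq
  simp only [mul_one, div_one] at h
  rw [theta3Real_eq_thetaSeries, theta3Real_eq_thetaSeries, theta4Real_eq_thetaSeries]
  linear_combination h

lemma theta3Real_mul_theta4Real (hq : |q| < 1) :
    theta3Real q * theta4Real q = theta4Real (q ^ 2) ^ 2 := by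
  have h := thetaSeries_mul_add_thetaSeries_neg_mul (s := 1) (t := -1) abs_one
    (by rw [abs_neg, abs_one]) hq
  simp only [neg_neg, mul_neg, mul_one, div_neg, div_one] at h
  rw [theta3Real_eq_thetaSeries, theta4Real_eq_thetaSeries, theta4Real_eq_thetaSeries]
  linear_combination h / 2

end ThetaSeries

lemma theta3Real_zero : theta3Real 0 = 1 := by
  simp only [theta3Real, zero_zpow_eq, sq_eq_zero_iff, tsum_ite_eq]

lemma tendsto_theta3Real_nhds_zero : Tendsto theta3Real (𝓝 0) (𝓝 1) := by
  rw [← theta3Real_zero]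
  refine tendsto_tsum_of_dominated_convergence (bound := fun n : ℤ => (1 / 2 : ℝ) ^ (n ^ 2))
    (summable_zpow_sq (by norm_num) (by norm_num))
    (fun n => continuousAt_zpow₀ _ _ (Or.inr (sq_nonneg n))) ?_
  filter_upwards [Metric.ball_mem_nhds (0 : ℝ) one_half_pos] with q hq n
  rw [norm_zpow]
  exact zpow_le_zpow_left₀ (sq_nonneg n) (norm_nonneg q) (mem_ball_zero_iff.1 hq).le

lemma agmSeq_eq_of_recurrence {a b : ℕ → ℝ} (ha : ∀ n, a (n + 1) = (a n + b n) / 2)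
    (hb : ∀ n, b (n + 1) = √(a n * b n)) (n : ℕ) : agmSeq (a 0) (b 0) n = (a n, b n) := by
  induction n with
  | zero => rfl
  | succ n ih => rw [agmSeq, ih, ha, hb]

lemma agm_eq_of_recurrence {a b : ℕ → ℝ} {L : ℝ} (ha : ∀ n, a (n + 1) = (a n + b n) / 2)
    (hb : ∀ n, b (n + 1) = √(a n * b n)) (hlim : Tendsto a atTop (𝓝 L)) :
    agm (a 0) (b 0) = L := by
  simp only [agm, agmSeq_eq_of_recurrence ha hb]
  exact hlim.limUnder_eq

theorem agm_theta3_sq_theta4_sq (q : ℝ) (hq0 : 0 < q) (hq1 : q < 1) :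
    agm (theta3Real q ^ 2) (theta4Real q ^ 2) = 1 := by
  have hq : |q| < 1 := abs_lt.2 ⟨by linarith, hq1⟩
  set r : ℕ → ℝ := fun n => q ^ 2 ^ n
  have hr : ∀ n, |r n| < 1 := fun n => by
    simpa only [r, abs_pow] using pow_lt_one₀ (abs_nonneg q) hq (by positivity)
  have hr_succ : ∀ n, r (n + 1) = r n ^ 2 := fun n => by simp only [r, pow_succ, pow_mul]
  have hr_lim : Tendsto r atTop (𝓝 0) :=
    (tendsto_pow_atTop_nhds_zero_of_abs_lt_one hq).comp
      (tendsto_pow_atTop_atTop_of_one_lt one_lt_two)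
  have h := agm_eq_of_recurrence (a := fun n => theta3Real (r n) ^ 2)
    (b := fun n => theta4Real (r n) ^ 2)
    (fun n => by simp only [hr_succ, theta3Real_sq_add_theta4Real_sq (hr n)]; ring)
    (fun n => by
      rw [← mul_pow, theta3Real_mul_theta4Real (hr n), hr_succ, Real.sqrt_sq (by positivity)])
    ((tendsto_theta3Real_nhds_zero.comp hr_lim).pow 2)
  simpa only [r, pow_zero, pow_one, one_pow] using h
end

section
/- For every odd integer n ≥ 3, T_n = Σ_{k odd, 1 ≤ k ≤ n−2} (n−1 choose k) · T_k · T_{n−1−k}, where T_m denotes the number of alternating permutations of {0,1,…,m−1}. -/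
/-- A permutation `σ` of `{0, 1, …, m−1}` is alternating if `σ 0 < σ 1 > σ 2 < σ 3 > …`,
i.e. `σ i < σ (i+1)` for even `i` and `σ i > σ (i+1)` for odd `i`. -/
def IsAlternating {m : ℕ} (σ : Equiv.Perm (Fin m)) : Prop :=
  ∀ (i : ℕ) (h : i + 1 < m),
    (Even i → σ ⟨i, Nat.lt_of_succ_lt h⟩ < σ ⟨i + 1, h⟩) ∧
    (¬ Even i → σ ⟨i + 1, h⟩ < σ ⟨i, Nat.lt_of_succ_lt h⟩)

/-- `altCount m` is the number of alternating permutations of `{0, 1, …, m−1}`. -/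
noncomputable def altCount (m : ℕ) : ℕ :=
  Nat.card {σ : Equiv.Perm (Fin m) // IsAlternating σ}

/-!
In an alternating permutation of odd length `n ≥ 3` the maximal value `n - 1` is a peak, so it
sits at an odd position `k`, `1 ≤ k ≤ n - 2`. Deleting it leaves an alternating word of length `k`
on its left and, since `k + 1` is even, an alternating word of length `n - 1 - k` on its right;
conversely, any such pair of words is glued back around the maximum into an alternating
permutation. Standardizing the two words along the order embeddings of their value sets, the
permutations with the maximum at `k` correspond to a `k`-subset of `{0, …, n - 2}` (the values on
the left) together with two alternating permutations, of lengths `k` and `n - 1 - k`.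
-/

open Equiv Finset Function

section Alternating

variable {α : Type*}

def Alternating [LT α] {m : ℕ} (f : Fin m → α) : Prop :=
  ∀ (i : ℕ) (h : i + 1 < m),
    (Even i → f ⟨i, Nat.lt_of_succ_lt h⟩ < f ⟨i + 1, h⟩) ∧
    (¬ Even i → f ⟨i + 1, h⟩ < f ⟨i, Nat.lt_of_succ_lt h⟩)

theorem isAlternating_iff_alternating {m : ℕ} (σ : Perm (Fin m)) :
    IsAlternating σ ↔ Alternating ⇑σ :=
  Iff.rfl

theorem StrictMono.alternating_comp_iff {β : Type*} [LinearOrder α] [Preorder β] {g : α → β}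
    (hg : StrictMono g) {m : ℕ} {f : Fin m → α} : Alternating (g ∘ f) ↔ Alternating f := by
  simp only [Alternating, comp_apply, hg.lt_iff_lt]

theorem Alternating.odd_of_forall_le [Preorder α] {n : ℕ} {f : Fin n → α} (hf : Alternating f)
    (h1 : 1 < n) {p : Fin n} (hp : ∀ i, f i ≤ f p) : Odd (p : ℕ) := by
  by_contra hev
  rw [Nat.not_odd_iff_even] at hev
  by_cases hlast : (p : ℕ) + 1 < n
  · exact ((hf p hlast).1 hev).not_ge (hp _)
  · have hp' : (p : ℕ) = n - 2 + 1 := by have := p.isLt; omega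
    have hodd : ¬ Even (n - 2) := by
      rw [hp'] at hev; simpa [Nat.even_add_one] using hev
    have := (hf (n - 2) (by omega)).2 hodd
    rw [show (⟨n - 2 + 1, _⟩ : Fin n) = p from Fin.ext hp'.symm] at this
    exact this.not_ge (hp _)

variable {a b : ℕ} {x : α} {g : Fin (a + b) → α}

theorem insertNth_apply_mk_of_lt {i : ℕ} (hi : i < a) :
    Fin.insertNth (α := fun _ => α) (⟨a, by omega⟩ : Fin (a + b + 1)) x g ⟨i, by omega⟩ =
      g (Fin.castAdd b ⟨i, hi⟩) := by
  have hsucc : (⟨i, by omega⟩ : Fin (a + b + 1)) =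
      (⟨a, by omega⟩ : Fin (a + b + 1)).succAbove (Fin.castAdd b ⟨i, hi⟩) := by
    rw [Fin.succAbove_of_castSucc_lt _ _ (by simpa [Fin.lt_def] using hi)]; rfl
  rw [hsucc, Fin.insertNth_apply_succAbove]

theorem insertNth_apply_mk_add_one_add {j : ℕ} (hj : j < b) :
    Fin.insertNth (α := fun _ => α) (⟨a, by omega⟩ : Fin (a + b + 1)) x g ⟨a + 1 + j, by omega⟩ =
      g (Fin.natAdd a ⟨j, hj⟩) := by
  have hsucc : (⟨a + 1 + j, by omega⟩ : Fin (a + b + 1)) =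
      (⟨a, by omega⟩ : Fin (a + b + 1)).succAbove (Fin.natAdd a ⟨j, hj⟩) := by
    rw [Fin.succAbove_of_le_castSucc _ _ (by simp [Fin.le_def])]; ext; simp; omega
  rw [hsucc, Fin.insertNth_apply_succAbove]

theorem alternating_insertNth_iff [Preorder α] (ha : Odd a) (hx : ∀ i, g i < x) :
    Alternating (Fin.insertNth (α := fun _ => α) (⟨a, by omega⟩ : Fin (a + b + 1)) x g) ↔
      Alternating (g ∘ Fin.castAdd b) ∧ Alternating (g ∘ Fin.natAdd a) := by
  have hpar (j : ℕ) : Even (a + 1 + j) ↔ Even j := by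
    simp [Nat.even_add, ha]
  constructor
  · intro hf
    refine ⟨fun i hi => ?_, fun j hj => ?_⟩
    · have := hf i (by omega)
      rwa [insertNth_apply_mk_of_lt (by omega), insertNth_apply_mk_of_lt hi] at this
    · have := hf (a + 1 + j) (by omega)
      rwa [insertNth_apply_mk_add_one_add (by omega),
        show (⟨a + 1 + j + 1, by omega⟩ : Fin (a + b + 1)) = ⟨a + 1 + (j + 1), by omega⟩ from rfl,
        insertNth_apply_mk_add_one_add hj, hpar] at this
  · rintro ⟨hl, hr⟩ i hi
    rcases lt_trichotomy (i + 1) a with hia | hia | hia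
    · rw [insertNth_apply_mk_of_lt (by omega), insertNth_apply_mk_of_lt hia]
      exact hl i hia
    · have hi_even : Even i := by obtain ⟨c, hc⟩ := ha; exact ⟨c, by omega⟩
      rw [insertNth_apply_mk_of_lt (by omega), show (⟨i + 1, hi⟩ : Fin (a + b + 1)) = ⟨a, by omega⟩
        from Fin.ext hia, Fin.insertNth_apply_same]
      exact ⟨fun _ => hx _, fun h => absurd hi_even h⟩
    obtain rfl | ⟨j, rfl⟩ : i = a ∨ ∃ j, i = a + 1 + j := by
      rcases Nat.lt_or_ge a i with h | h
      · exact Or.inr ⟨i - a - 1, by omega⟩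
      · exact Or.inl (by omega)
    · rw [insertNth_apply_mk_add_one_add (j := 0) (by omega), Fin.insertNth_apply_same]
      exact ⟨fun heven => absurd heven (Nat.not_even_iff_odd.mpr ha), fun _ => hx _⟩
    · rw [insertNth_apply_mk_add_one_add (by omega),
        show (⟨a + 1 + j + 1, hi⟩ : Fin (a + b + 1)) = ⟨a + 1 + (j + 1), by omega⟩ from rfl,
        insertNth_apply_mk_add_one_add (by omega), hpar]
      exact hr j (by omega)

end Alternating

section InsertMax

variable {m : ℕ} (p : Fin (m + 1))

def insertMax (τ : Perm (Fin m)) : Perm (Fin (m + 1)) :=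
  (finSuccEquiv' p).trans (τ.optionCongr.trans (finSuccEquiv' (Fin.last m)).symm)

theorem coe_insertMax (τ : Perm (Fin m)) :
    ⇑(insertMax p τ) = Fin.insertNth p (Fin.last m) (Fin.castSucc ∘ τ) := by
  funext i
  induction i using Fin.succAboveCases p <;> simp [insertMax]

theorem insertMax_injective : Injective (insertMax p) := by
  intro τ τ' h
  refine Equiv.ext fun i => ?_
  simpa [coe_insertMax] using DFunLike.congr_fun h (p.succAbove i)

theorem exists_insertMax_eq {σ : Perm (Fin (m + 1))} (hσ : σ p = Fin.last m) :
    ∃ τ, insertMax p τ = σ := by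
  have hne (i : Fin m) : σ (p.succAbove i) ≠ Fin.last m :=
    hσ ▸ σ.injective.ne (p.succAbove_ne i)
  have hinj : Injective fun i => (σ (p.succAbove i)).castPred (hne i) := fun i j hij =>
    p.succAbove_right_injective (σ.injective (Fin.castPred_inj.mp hij))
  refine ⟨Equiv.ofBijective _ (Finite.injective_iff_bijective.mp hinj), ?_⟩
  ext1 i
  induction i using Fin.succAboveCases p <;> simp [coe_insertMax, hσ]

theorem card_and_apply_eq_last (P : Perm (Fin (m + 1)) → Prop) :
    Nat.card {σ // P σ ∧ σ p = Fin.last m} = Nat.card {τ // P (insertMax p τ)} := by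
  refine (Nat.card_congr (Equiv.subtypeEquivRight fun σ => ?_)).trans
    (Nat.card_image_of_injective (insertMax_injective p) {τ | P (insertMax p τ)})
  constructor
  · rintro ⟨hP, hσ⟩
    obtain ⟨τ, rfl⟩ := exists_insertMax_eq p hσ
    exact ⟨τ, hP, rfl⟩
  · rintro ⟨τ, hP, rfl⟩
    exact ⟨hP, by simp [coe_insertMax]⟩

end InsertMax

section Interleave

variable {a b : ℕ}

theorem card_compl_of_card_eq {S : Finset (Fin (a + b))} (hS : #S = a) : #Sᶜ = b := by
  rw [card_compl, Fintype.card_fin, hS, Nat.add_sub_cancel_left]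

noncomputable def interleave
    (x : {S : Finset (Fin (a + b)) // #S = a} × Perm (Fin a) × Perm (Fin b)) : Perm (Fin (a + b)) :=
  Equiv.ofBijective (Fin.append (x.1.1.orderEmbOfFin x.1.2 ∘ x.2.1)
      (x.1.1ᶜ.orderEmbOfFin (card_compl_of_card_eq x.1.2) ∘ x.2.2)) <| by
    refine Finite.injective_iff_bijective.mp (Fin.append_injective_iff.mpr
      ⟨(orderEmbOfFin _ _).injective.comp x.2.1.injective,
        (orderEmbOfFin _ _).injective.comp x.2.2.injective, fun i j h => ?_⟩)
    have hi := orderEmbOfFin_mem x.1.1 x.1.2 (x.2.1 i)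
    have hj := orderEmbOfFin_mem x.1.1ᶜ (card_compl_of_card_eq x.1.2) (x.2.2 j)
    rw [comp_apply, comp_apply] at h
    rw [h] at hi
    exact mem_compl.mp hj hi

variable (x : {S : Finset (Fin (a + b)) // #S = a} × Perm (Fin a) × Perm (Fin b))

theorem interleave_comp_castAdd :
    ⇑(interleave x) ∘ Fin.castAdd b = x.1.1.orderEmbOfFin x.1.2 ∘ x.2.1 := by
  funext i; simp [interleave]

theorem interleave_comp_natAdd :
    ⇑(interleave x) ∘ Fin.natAdd a =
      x.1.1ᶜ.orderEmbOfFin (card_compl_of_card_eq x.1.2) ∘ x.2.2 := by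
  funext i; simp [interleave]

theorem interleave_injective : Injective (interleave (a := a) (b := b)) := by
  rintro ⟨⟨S, hS⟩, σ, τ⟩ ⟨⟨S', hS'⟩, σ', τ'⟩ h
  have hl := congrArg (fun ρ : Perm (Fin (a + b)) => ⇑ρ ∘ Fin.castAdd b) h
  have hr := congrArg (fun ρ : Perm (Fin (a + b)) => ⇑ρ ∘ Fin.natAdd a) h
  simp only [interleave_comp_castAdd, interleave_comp_natAdd] at hl hr
  obtain rfl : S = S' := by
    simpa [Set.range_comp, range_orderEmbOfFin] using congrArg Set.range hl
  obtain rfl : σ = σ' := Equiv.ext fun i => (orderEmbOfFin S hS).injective (congrFun hl i)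
  obtain rfl : τ = τ' := Equiv.ext fun j => (orderEmbOfFin Sᶜ _).injective (congrFun hr j)
  rfl

theorem interleave_bijective : Bijective (interleave (a := a) (b := b)) := by
  refine (Fintype.bijective_iff_injective_and_card _).mpr ⟨interleave_injective, ?_⟩
  simp only [Fintype.card_prod, Fintype.card_finset_len, Fintype.card_perm, Fintype.card_fin]
  rw [← mul_assoc, ← Nat.choose_mul_factorial_mul_factorial (Nat.le_add_right a b),
    Nat.add_sub_cancel_left]

theorem card_alternating_comp_castAdd_and_natAdd :
    Nat.card {τ : Perm (Fin (a + b)) // Alternating (τ ∘ Fin.castAdd b) ∧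
      Alternating (τ ∘ Fin.natAdd a)} = (a + b).choose a * altCount a * altCount b := by
  let e : {x : {S : Finset (Fin (a + b)) // #S = a} × Perm (Fin a) × Perm (Fin b) //
      IsAlternating x.2.1 ∧ IsAlternating x.2.2} ≃
      {S : Finset (Fin (a + b)) // #S = a} × {σ // IsAlternating σ} × {τ // IsAlternating τ} :=
    { toFun x := (x.1.1, ⟨x.1.2.1, x.2.1⟩, ⟨x.1.2.2, x.2.2⟩)
      invFun y := ⟨(y.1, y.2.1, y.2.2), y.2.1.2, y.2.2.2⟩ }
  calc _ = Nat.card {x : {S : Finset (Fin (a + b)) // #S = a} × Perm (Fin a) × Perm (Fin b) //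
        IsAlternating x.2.1 ∧ IsAlternating x.2.2} := by
        refine (Nat.card_congr ((Equiv.ofBijective _ interleave_bijective).subtypeEquiv
          fun x => ?_)).symm
        simp only [Equiv.ofBijective_apply, interleave_comp_castAdd, interleave_comp_natAdd,
          (orderEmbOfFin _ _).strictMono.alternating_comp_iff, isAlternating_iff_alternating]
    _ = _ := by
      rw [Nat.card_congr e, Nat.card_prod, Nat.card_prod, Nat.card_eq_fintype_card,
        Fintype.card_finset_len, Fintype.card_fin, mul_assoc]
      rfl

end Interleave

theorem card_alternating_apply_eq_last {a b : ℕ} (ha : Odd a) :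
    Nat.card {σ : Perm (Fin (a + b + 1)) //
      IsAlternating σ ∧ σ ⟨a, by omega⟩ = Fin.last (a + b)} =
      (a + b).choose a * altCount a * altCount b := by
  rw [card_and_apply_eq_last, ← card_alternating_comp_castAdd_and_natAdd]
  refine Nat.card_congr (Equiv.subtypeEquivRight fun τ => ?_)
  rw [isAlternating_iff_alternating, coe_insertMax,
    alternating_insertNth_iff (g := Fin.castSucc ∘ τ) ha fun i => Fin.castSucc_lt_last _,
    comp_assoc, comp_assoc, Fin.strictMono_castSucc.alternating_comp_iff,
    Fin.strictMono_castSucc.alternating_comp_iff]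

theorem IsAlternating.odd_symm_last {m : ℕ} (hm : 0 < m) {σ : Perm (Fin (m + 1))}
    (hσ : IsAlternating σ) : Odd (σ.symm (Fin.last m) : ℕ) :=
  Alternating.odd_of_forall_le hσ (by omega) fun i => by
    simpa using Fin.le_last (σ i)

theorem altCount_recurrence (n : ℕ) (hn : 3 ≤ n) (hodd : Odd n) :
    altCount n =
      ∑ k ∈ (Finset.Icc 1 (n - 2)).filter (fun k => Odd k),
        (n - 1).choose k * altCount k * altCount (n - 1 - k) := by
  classical
  obtain ⟨m, rfl⟩ : ∃ m, n = m + 1 := ⟨n - 1, by omega⟩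
  have hmaps : ∀ σ ∈ univ.filter (IsAlternating (m := m + 1)),
      (σ.symm (Fin.last m) : ℕ) ∈ (Icc 1 (m + 1 - 2)).filter Odd := by
    intro σ hσ
    simp only [mem_filter, mem_univ, true_and, mem_Icc] at hσ ⊢
    have hk := hσ.odd_symm_last (by omega)
    have := (σ.symm (Fin.last m)).isLt
    have := Nat.odd_iff.mp hk
    have := Nat.odd_iff.mp hodd
    exact ⟨⟨by omega, by omega⟩, hk⟩
  rw [altCount, Nat.card_eq_fintype_card, Fintype.card_subtype, card_eq_sum_card_fiberwise hmaps]
  refine sum_congr rfl fun k hk => ?_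
  simp only [mem_filter, mem_Icc] at hk
  obtain ⟨b, rfl⟩ : ∃ b, m = k + b := ⟨m - k, by omega⟩
  rw [Nat.add_sub_cancel, Nat.add_sub_cancel_left, ← card_alternating_apply_eq_last hk.2,
    Nat.card_eq_fintype_card, Fintype.card_subtype, filter_filter]
  refine congrArg card (filter_congr fun σ _ => and_congr_right fun _ => ?_)
  rw [← σ.eq_symm_apply, Fin.ext_iff]
  exact eq_comm
end

section
/- Let T(s) ∈ ℚ⟦s⟧ be the formal power series whose coefficient of sⁿ is T_n/n! for odd n and 0 for even n, where T_n is the number of alternating permutations of {0,…,n−1}. Then the formal derivative of T satisfies T'(s) = 1 + T(s)². -/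
/-- The exponential generating function `T(s) = ∑_{n odd} T_n sⁿ/n!` of the numbers of
alternating permutations, as a formal power series over `ℚ`. -/
noncomputable def altEgf : PowerSeries ℚ :=
  PowerSeries.mk fun n => if Odd n then (altCount n : ℚ) / n.factorial else 0

/-!
Cutting an alternating permutation of `{0, …, n}` (`n ≥ 1`) at its maximum `n`, which must sit
at an odd position `k`, leaves alternating sequences of lengths `k` and `n - k`: one on the set
`S` of values left of the maximum, one on the remaining values. Conversely, any such pair glued
around `n` is alternating. Only the relative order of the values matters, so each `S` with `#S = k`
odd contributes `T_k T_{n-k}`, and `T_{n+1} = ∑_{k odd} (n choose k) T_k T_{n-k}`. Writing `t_m`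
for `T_m` at odd `m` and `0` otherwise, this becomes `t_{n+1} = ∑_k (n choose k) t_k t_{n-k}`
(for odd `n` both sides vanish by parity), which is the `sⁿ`-coefficient of `T' = T²` by the
product rule for exponential generating functions; `T_1 = 1` gives the constant term.
-/

open Finset

section AlternatingFun

variable {α β : Type*} [LinearOrder α] [LinearOrder β] {m : ℕ}

def IsAlternatingFun (f : Fin m → α) : Prop :=
  ∀ (i : ℕ) (h : i + 1 < m),
    (Even i → f ⟨i, Nat.lt_of_succ_lt h⟩ < f ⟨i + 1, h⟩) ∧
    (¬ Even i → f ⟨i + 1, h⟩ < f ⟨i, Nat.lt_of_succ_lt h⟩)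

theorem isAlternating_iff_isAlternatingFun {σ : Equiv.Perm (Fin m)} :
    IsAlternating σ ↔ IsAlternatingFun ⇑σ :=
  Iff.rfl

theorem StrictMono.isAlternatingFun_comp_iff {g : α → β} (hg : StrictMono g)
    {f : Fin m → α} :
    IsAlternatingFun (g ∘ f) ↔ IsAlternatingFun f := by
  simp only [IsAlternatingFun, Function.comp_apply, hg.lt_iff_lt]

theorem IsAlternatingFun.odd_of_forall_le {f : Fin m → α} (hf : IsAlternatingFun f) (hm : 1 < m)
    {p : Fin m} (hp : ∀ q, f q ≤ f p) : Odd p.val := by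
  by_contra hodd
  have heven : Even p.val := Nat.not_odd_iff_even.mp hodd
  by_cases hnext : p.val + 1 < m
  · exact (hp _).not_gt ((hf p hnext).1 heven)
  · have hprev : p.val - 1 + 1 < m := by omega
    have hp' : (⟨p.val - 1 + 1, hprev⟩ : Fin m) = p := Fin.ext (by simp only; omega)
    have hodd_prev : ¬ Even (p.val - 1) := by
      obtain ⟨c, hc⟩ := heven
      exact Nat.not_even_iff_odd.mpr ⟨c - 1, by omega⟩
    have hdown := (hf (p.val - 1) hprev).2 hodd_prev
    rw [hp'] at hdown
    exact (hp _).not_gt hdown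

theorem card_isAlternatingFun_range_eq (s : Finset α) (hs : #s = m) :
    Nat.card {f : Fin m → α // Set.range f = s ∧ IsAlternatingFun f} = altCount m := by
  let e := s.orderEmbOfFin hs
  symm
  refine Nat.card_eq_of_bijective (fun σ => ⟨e ∘ σ.1, ?_, ?_⟩) ⟨?_, ?_⟩
  · rw [Set.range_comp, σ.1.range_eq_univ, Set.image_univ, range_orderEmbOfFin]
  · exact e.strictMono.isAlternatingFun_comp_iff.mpr σ.2
  · intro σ τ h
    exact Subtype.ext (Equiv.ext fun j => e.injective (congrFun (congrArg Subtype.val h) j))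
  · rintro ⟨f, hrange, halt⟩
    have hmem : ∀ j, ∃ i, e i = f j := fun j => by
      rw [← Set.mem_range, range_orderEmbOfFin, ← hrange]
      exact Set.mem_range_self j
    choose g hg using hmem
    have hsurj : Function.Surjective g := fun i => by
      obtain ⟨j, hj⟩ : e i ∈ Set.range f := by
        rw [hrange, ← range_orderEmbOfFin s hs]
        exact Set.mem_range_self i
      exact ⟨j, e.injective (by rw [hg, hj])⟩
    have hfg : ⇑e ∘ g = f := funext hg
    refine ⟨⟨Equiv.ofBijective g (Finite.surjective_iff_bijective.mp hsurj), ?_⟩,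
      Subtype.ext hfg⟩
    exact e.strictMono.isAlternatingFun_comp_iff.mp (hfg ▸ halt)

end AlternatingFun

section Split

variable {α : Type*} {n k : ℕ}

def leftOf (hk : k ≤ n) (f : Fin (n + 1) → α) : Fin k → α :=
  fun j => f ⟨j, by omega⟩

def rightOf (k : ℕ) (f : Fin (n + 1) → α) : Fin (n - k) → α :=
  fun j => f ⟨k + 1 + j, by omega⟩

def glueAt (k : ℕ) (f₁ : Fin k → α) (M : α) (f₂ : Fin (n - k) → α) :
    Fin (n + 1) → α :=
  fun p => if h₁ : p.val < k then f₁ ⟨p, h₁⟩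
    else if h₂ : k < p.val then f₂ ⟨p - (k + 1), by omega⟩ else M

variable {f₁ : Fin k → α} {M : α} {f₂ : Fin (n - k) → α} {p : Fin (n + 1)}

theorem glueAt_of_lt (hp : p.val < k) : glueAt k f₁ M f₂ p = f₁ ⟨p, hp⟩ :=
  dif_pos hp

theorem glueAt_of_eq (hp : p.val = k) : glueAt k f₁ M f₂ p = M := by
  rw [glueAt, dif_neg (by omega), dif_neg (by omega)]

theorem glueAt_of_gt (hp : k < p.val) :
    glueAt k f₁ M f₂ p = f₂ ⟨p - (k + 1), by omega⟩ := by
  rw [glueAt, dif_neg (by omega), dif_pos hp]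

theorem leftOf_glueAt (hk : k ≤ n) : leftOf hk (glueAt k f₁ M f₂) = f₁ :=
  funext fun j => glueAt_of_lt j.isLt

theorem rightOf_glueAt : rightOf k (glueAt k f₁ M f₂) = f₂ :=
  funext fun j => by
    rw [rightOf, glueAt_of_gt (by simp only; omega)]
    congr
    simp only
    omega

theorem glueAt_leftOf_rightOf (hk : k ≤ n) {f : Fin (n + 1) → α}
    (hM : f ⟨k, by omega⟩ = M) :
    glueAt k (leftOf hk f) M (rightOf k f) = f := by
  funext p
  rcases lt_trichotomy p.val k with hp | hp | hp
  · rw [glueAt_of_lt hp, leftOf]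
  · rw [glueAt_of_eq hp, ← hM]
    exact congrArg f (Fin.ext hp.symm)
  · rw [glueAt_of_gt hp, rightOf]
    congr
    simp only
    omega

theorem range_glueAt (hk : k ≤ n) :
    Set.range (glueAt k f₁ M f₂) = Set.range f₁ ∪ {M} ∪ Set.range f₂ := by
  apply subset_antisymm
  · rintro _ ⟨p, rfl⟩
    unfold glueAt
    split_ifs <;> simp
  · rintro _ ((⟨j, rfl⟩ | rfl) | ⟨j, rfl⟩)
    · exact ⟨_, congrFun (leftOf_glueAt hk) j⟩
    · exact ⟨⟨k, by omega⟩, glueAt_of_eq rfl⟩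
    · exact ⟨_, congrFun rightOf_glueAt j⟩

theorem Function.Injective.apply_mem_range_leftOf_iff {f : Fin (n + 1) → α}
    (hf : Function.Injective f) (hk : k ≤ n) : f p ∈ Set.range (leftOf hk f) ↔ p.val < k := by
  constructor
  · rintro ⟨j, hj⟩
    rw [← hf hj]
    exact j.isLt
  · exact fun hp => ⟨⟨p, hp⟩, rfl⟩

theorem Function.Injective.apply_mem_range_rightOf_iff {f : Fin (n + 1) → α}
    (hf : Function.Injective f) : f p ∈ Set.range (rightOf k f) ↔ k < p.val := by
  constructor
  · rintro ⟨j, hj⟩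
    rw [← hf hj]
    simp only
    omega
  · exact fun hp => ⟨⟨p - (k + 1), by omega⟩, congrArg f (Fin.ext (by simp only; omega))⟩

end Split

section SplitAlternating

variable {α : Type*} [LinearOrder α] {n k : ℕ}

theorem Odd.even_add_one_add_iff (hk : Odd k) (i : ℕ) : Even (k + 1 + i) ↔ Even i := by
  simp [Nat.even_add, hk.add_one]

theorem IsAlternatingFun.leftOf {f : Fin (n + 1) → α} (hf : IsAlternatingFun f) (hk : k ≤ n) :
    IsAlternatingFun (leftOf hk f) :=
  fun i hi => hf i (by omega)

theorem IsAlternatingFun.rightOf {f : Fin (n + 1) → α} (hf : IsAlternatingFun f) (hk : Odd k) :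
    IsAlternatingFun (rightOf k f) := fun i hi => by
  have h := hf (k + 1 + i) (by omega)
  rw [hk.even_add_one_add_iff] at h
  exact h

theorem IsAlternatingFun.glueAt {f₁ : Fin k → α} {M : α} {f₂ : Fin (n - k) → α}
    (h₁ : IsAlternatingFun f₁) (h₂ : IsAlternatingFun f₂) (hk : Odd k)
    (hM₁ : ∀ i, f₁ i < M) (hM₂ : ∀ j, f₂ j < M) :
    IsAlternatingFun (glueAt k f₁ M f₂) := by
  intro i hi
  rcases lt_trichotomy (i + 1) k with hlt | heq | hgt
  · rw [glueAt_of_lt (by simp only; omega), glueAt_of_lt hlt]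
    exact h₁ i hlt
  · rw [glueAt_of_lt (by simp only; omega), glueAt_of_eq heq]
    subst heq
    exact ⟨fun _ => hM₁ _, fun hi => absurd (by simpa [Nat.odd_add_one] using hk) hi⟩
  rcases eq_or_lt_of_le (Nat.le_of_lt_succ hgt) with heq | hgt
  · rw [glueAt_of_eq heq.symm, glueAt_of_gt (by simp only; omega)]
    subst heq
    exact ⟨fun hi => absurd hi (Nat.not_even_iff_odd.mpr hk), fun _ => hM₂ _⟩
  · have h := h₂ (i - (k + 1)) (by omega)
    rw [← hk.even_add_one_add_iff, Nat.add_sub_cancel' hgt] at h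
    rw [glueAt_of_gt (by simp only; omega), glueAt_of_gt (by simp only; omega)]
    convert h using 4 <;> simp only [Fin.mk.injEq] <;> omega

end SplitAlternating

section MaxSplit

variable {n k : ℕ}

def valuesBeforeMax (σ : Equiv.Perm (Fin (n + 1))) : Finset (Fin (n + 1)) :=
  (Iio (σ.symm (Fin.last n))).image σ

theorem card_valuesBeforeMax (σ : Equiv.Perm (Fin (n + 1))) :
    #(valuesBeforeMax σ) = σ.symm (Fin.last n) := by
  rw [valuesBeforeMax, card_image_of_injective _ σ.injective, Fin.card_Iio]

theorem last_notMem_valuesBeforeMax (σ : Equiv.Perm (Fin (n + 1))) :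
    Fin.last n ∉ valuesBeforeMax σ := by
  simp [valuesBeforeMax, ← σ.eq_symm_apply]

theorem coe_valuesBeforeMax (hk : k ≤ n) {σ : Equiv.Perm (Fin (n + 1))}
    (hσ : σ ⟨k, by omega⟩ = Fin.last n) :
    (valuesBeforeMax σ : Set (Fin (n + 1))) = Set.range (leftOf hk σ) := by
  ext x
  obtain ⟨p, rfl⟩ := σ.surjective x
  rw [σ.injective.apply_mem_range_leftOf_iff, valuesBeforeMax, coe_image,
    σ.injective.mem_set_image, coe_Iio, Set.mem_Iio, ← hσ, σ.symm_apply_apply, Fin.lt_def]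

theorem apply_eq_last_of_card_valuesBeforeMax (hk : k ≤ n) {σ : Equiv.Perm (Fin (n + 1))}
    (hσ : #(valuesBeforeMax σ) = k) : σ ⟨k, by omega⟩ = Fin.last n :=
  σ.eq_symm_apply.mp (Fin.ext (by rw [← card_valuesBeforeMax, hσ]))

theorem range_rightOf (hk : k ≤ n) {σ : Equiv.Perm (Fin (n + 1))}
    (hσ : σ ⟨k, by omega⟩ = Fin.last n) :
    Set.range (rightOf k σ) = ↑((valuesBeforeMax σ)ᶜ.erase (Fin.last n)) := by
  ext x
  obtain ⟨p, rfl⟩ := σ.surjective x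
  have hbefore : σ p ∈ valuesBeforeMax σ ↔ p.val < k := by
    rw [← mem_coe, coe_valuesBeforeMax hk hσ, σ.injective.apply_mem_range_leftOf_iff]
  have hlast : σ p = Fin.last n ↔ p.val = k := by
    rw [← hσ, σ.injective.eq_iff, Fin.ext_iff]
  rw [σ.injective.apply_mem_range_rightOf_iff, mem_coe, mem_erase, mem_compl, hbefore, Ne, hlast]
  omega

end MaxSplit

theorem exists_isAlternating_leftOf_rightOf {n k : ℕ} {S : Finset (Fin (n + 1))}
    (hlast : Fin.last n ∉ S) (hkn : k ≤ n) (hk : Odd k)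
    {f₁ : Fin k → Fin (n + 1)} (hf₁ : Set.range f₁ = S) (ha₁ : IsAlternatingFun f₁)
    {f₂ : Fin (n - k) → Fin (n + 1)} (hf₂ : Set.range f₂ = ↑(Sᶜ.erase (Fin.last n)))
    (ha₂ : IsAlternatingFun f₂) :
    ∃ σ : Equiv.Perm (Fin (n + 1)), (IsAlternating σ ∧ valuesBeforeMax σ = S) ∧
      leftOf hkn σ = f₁ ∧ rightOf k σ = f₂ := by
  classical
  have hsurj : Function.Surjective (glueAt k f₁ (Fin.last n) f₂) := by
    rw [← Set.range_eq_univ, range_glueAt hkn, hf₁, hf₂, Set.eq_univ_iff_forall]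
    intro x
    by_cases hx : x ∈ S <;> by_cases hx' : x = Fin.last n <;> simp [hx, hx']
  let σ := Equiv.ofBijective _ (Finite.surjective_iff_bijective.mp hsurj)
  have hσ : σ ⟨k, by omega⟩ = Fin.last n := glueAt_of_eq rfl
  have hlt₁ (i : Fin k) : f₁ i < Fin.last n := by
    have hi : f₁ i ∈ (S : Set _) := hf₁ ▸ Set.mem_range_self i
    exact Fin.lt_last_iff_ne_last.mpr fun h => hlast (h ▸ hi)
  have hlt₂ (j : Fin (n - k)) : f₂ j < Fin.last n := by
    have hj : f₂ j ∈ Sᶜ.erase (Fin.last n) := mem_coe.mp (hf₂ ▸ Set.mem_range_self j)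
    exact Fin.lt_last_iff_ne_last.mpr (mem_erase.mp hj).1
  refine ⟨σ, ⟨ha₁.glueAt ha₂ hk hlt₁ hlt₂, coe_injective ?_⟩, leftOf_glueAt hkn,
    rightOf_glueAt⟩
  rw [coe_valuesBeforeMax hkn hσ, ← hf₁]
  exact congrArg Set.range (leftOf_glueAt hkn)

theorem card_isAlternating_valuesBeforeMax_eq {n k : ℕ} {S : Finset (Fin (n + 1))}
    (hlast : Fin.last n ∉ S) (hS : #S = k) (hk : Odd k) :
    Nat.card {σ : Equiv.Perm (Fin (n + 1)) // IsAlternating σ ∧ valuesBeforeMax σ = S} =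
      altCount k * altCount (n - k) := by
  classical
  have hkn : k ≤ n := by
    have := card_le_card (subset_erase.mpr ⟨subset_univ S, hlast⟩)
    rw [card_erase_of_mem (mem_univ _), card_univ, Fintype.card_fin] at this
    omega
  have hT : #(Sᶜ.erase (Fin.last n)) = n - k := by
    rw [card_erase_of_mem (mem_compl.mpr hlast), card_compl, Fintype.card_fin, hS]
    omega
  have hmax {σ : Equiv.Perm (Fin (n + 1))} (hσ : valuesBeforeMax σ = S) :
      σ ⟨k, by omega⟩ = Fin.last n :=
    apply_eq_last_of_card_valuesBeforeMax hkn (hσ ▸ hS)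
  have hrangeL {σ : Equiv.Perm (Fin (n + 1))} (hσ : valuesBeforeMax σ = S) :
      Set.range (leftOf hkn σ) = S := by
    rw [← coe_valuesBeforeMax hkn (hmax hσ), hσ]
  have hrangeR {σ : Equiv.Perm (Fin (n + 1))} (hσ : valuesBeforeMax σ = S) :
      Set.range (rightOf k σ) = ↑(Sᶜ.erase (Fin.last n)) := by
    rw [range_rightOf hkn (hmax hσ), hσ]
  have halt {σ : Equiv.Perm (Fin (n + 1))} (hσ : IsAlternating σ) : IsAlternatingFun ⇑σ :=
    isAlternating_iff_isAlternatingFun.mp hσ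
  rw [← card_isAlternatingFun_range_eq S hS, ← card_isAlternatingFun_range_eq _ hT,
    ← Nat.card_prod]
  refine Nat.card_eq_of_bijective (fun σ =>
    (⟨leftOf hkn σ.1, hrangeL σ.2.2, (halt σ.2.1).leftOf hkn⟩,
     ⟨rightOf k σ.1, hrangeR σ.2.2, (halt σ.2.1).rightOf hk⟩)) ⟨?_, ?_⟩
  · rintro ⟨σ, _, hσ⟩ ⟨τ, _, hτ⟩ h
    simp only [Prod.mk.injEq, Subtype.mk.injEq] at h
    refine Subtype.ext (Equiv.coe_fn_injective ?_)
    calc ⇑σ = glueAt k (leftOf hkn σ) (Fin.last n) (rightOf k σ) :=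
          (glueAt_leftOf_rightOf hkn (hmax hσ)).symm
      _ = glueAt k (leftOf hkn τ) (Fin.last n) (rightOf k τ) := by rw [h.1, h.2]
      _ = τ := glueAt_leftOf_rightOf hkn (hmax hτ)
  · rintro ⟨⟨f₁, hf₁, ha₁⟩, ⟨f₂, hf₂, ha₂⟩⟩
    obtain ⟨σ, hσ, hleft, hright⟩ :=
      exists_isAlternating_leftOf_rightOf hlast hkn hk hf₁ ha₁ hf₂ ha₂
    exact ⟨⟨σ, hσ⟩, Prod.ext (Subtype.ext hleft) (Subtype.ext hright)⟩

theorem altCount_one : altCount 1 = 1 := by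
  classical
  have hall (σ : Equiv.Perm (Fin 1)) : IsAlternating σ := fun i hi => absurd hi (by omega)
  rw [altCount, Nat.card_eq_fintype_card, Fintype.card_subtype,
    filter_true_of_mem fun σ _ => hall σ]
  rfl

theorem altCount_succ {n : ℕ} (hn : n ≠ 0) :
    altCount (n + 1) = ∑ k ∈ range (n + 1),
      n.choose k * if Odd k then altCount k * altCount (n - k) else 0 := by
  classical
  let A : Finset (Equiv.Perm (Fin (n + 1))) := {σ | IsAlternating σ}
  have hmaps : Set.MapsTo valuesBeforeMax (A : Set (Equiv.Perm (Fin (n + 1))))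
      ((univ.erase (Fin.last n)).powerset : Set (Finset (Fin (n + 1)))) :=
    fun σ _ => mem_powerset.mpr fun x hx =>
      mem_erase.mpr ⟨fun h => last_notMem_valuesBeforeMax σ (h ▸ hx), mem_univ x⟩
  have hfiber (S) (hS : S ∈ (univ.erase (Fin.last n)).powerset) :
      #{σ ∈ A | valuesBeforeMax σ = S} =
        if Odd #S then altCount #S * altCount (n - #S) else 0 := by
    have hlast : Fin.last n ∉ S := fun h => (mem_erase.mp (mem_powerset.mp hS h)).1 rfl
    split_ifs with hodd
    · rw [← card_isAlternating_valuesBeforeMax_eq hlast rfl hodd, Nat.card_eq_fintype_card,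
        Fintype.card_subtype, filter_filter]
    · -- the maximum of an alternating permutation sits at an odd position
      refine card_eq_zero.mpr (filter_eq_empty_iff.mpr fun σ hσ hσS => hodd ?_)
      rw [← hσS, card_valuesBeforeMax]
      exact (isAlternating_iff_isAlternatingFun.mp (by simpa [A] using hσ)).odd_of_forall_le
        (by omega) fun q => by rw [σ.apply_symm_apply]; exact Fin.le_last _
  have hcard : #(univ.erase (Fin.last n)) = n := by simp
  rw [altCount, Nat.card_eq_fintype_card, Fintype.card_subtype, card_eq_sum_card_fiberwise hmaps,
    sum_congr rfl hfiber,
    sum_powerset_apply_card fun k => if Odd k then altCount k * altCount (n - k) else 0, hcard]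
  simp only [smul_eq_mul]

open PowerSeries Nat in
theorem PowerSeries.coeff_mk_div_factorial_mul {K : Type*} [Field K] [CharZero K] (a b : ℕ → K)
    (n : ℕ) :
    coeff n (mk (fun i => a i / i !) * mk fun i => b i / i !) =
      (∑ k ∈ range (n + 1), n.choose k * a k * b (n - k)) / n ! := by
  rw [coeff_mul, Nat.sum_antidiagonal_eq_sum_range_succ fun i j => coeff i (mk _) * coeff j (mk _),
    sum_div]
  refine sum_congr rfl fun k hk => ?_
  have hkn : k ≤ n := Nat.lt_succ_iff.mp (mem_range.mp hk)
  have hchoose : (n.choose k * k ! * (n - k)! : K) = n ! := by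
    exact_mod_cast choose_mul_factorial_mul_factorial hkn
  have hchoose0 : (n.choose k : K) ≠ 0 := by exact_mod_cast (choose_pos hkn).ne'
  simp only [coeff_mk]
  rw [← hchoose]
  field_simp

noncomputable def oddAltCount (n : ℕ) : ℕ :=
  if Odd n then altCount n else 0

theorem oddAltCount_succ {n : ℕ} (hn : n ≠ 0) :
    oddAltCount (n + 1) =
      ∑ k ∈ range (n + 1), n.choose k * (oddAltCount k * oddAltCount (n - k)) := by
  rcases n.even_or_odd with ⟨d, hd⟩ | hodd
  · rw [oddAltCount, if_pos (Even.add_one ⟨d, hd⟩), altCount_succ hn]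
    refine sum_congr rfl fun k hk => ?_
    have hkn : k ≤ n := Nat.lt_succ_iff.mp (mem_range.mp hk)
    by_cases hk : Odd k
    · have hnk : Odd (n - k) := by
        obtain ⟨c, hc⟩ := hk
        exact ⟨d - c - 1, by omega⟩
      simp only [oddAltCount, if_pos hk, if_pos hnk]
    · simp only [oddAltCount, if_neg hk, zero_mul]
  · rw [oddAltCount, if_neg (Nat.not_odd_iff_even.mpr hodd.add_one), eq_comm]
    refine sum_eq_zero fun k hk => ?_
    have hkn : k ≤ n := Nat.lt_succ_iff.mp (mem_range.mp hk)
    rcases k.even_or_odd with hk | ⟨c, hc⟩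
    · simp [oddAltCount, Nat.not_odd_iff_even.mpr hk]
    · have hnk : Even (n - k) := by
        obtain ⟨d, hd⟩ := hodd
        exact ⟨d - c, by omega⟩
      simp [oddAltCount, Nat.not_odd_iff_even.mpr hnk]

theorem altEgf_eq_mk : altEgf = PowerSeries.mk fun n => (oddAltCount n : ℚ) / n.factorial := by
  ext n
  simp only [altEgf, oddAltCount, PowerSeries.coeff_mk]
  split_ifs <;> simp

theorem altEgf_deriv : PowerSeries.derivativeFun altEgf = 1 + altEgf ^ 2 := by
  show PowerSeries.derivative ℚ altEgf = _
  ext n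
  rw [PowerSeries.coeff_derivative, map_add, sq, altEgf_eq_mk,
    PowerSeries.coeff_mk_div_factorial_mul, PowerSeries.coeff_mk, PowerSeries.coeff_one]
  rcases eq_or_ne n 0 with rfl | hn
  · simp [oddAltCount, altCount_one]
  · rw [if_neg hn, zero_add, oddAltCount_succ hn, Nat.factorial_succ]
    push_cast
    field_simp
end
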